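/- arXiv:2201.02013 — 5 statements merged into one kernel-verified Lean document; each statement's English description precedes it below -/
import Mathlib

section
/- For every integer n ≥ 2 there exists a triple (c_0, c_1, c_2) ∈ Z_4 × Z_{2n} × Z_{2n²} such that the code C_n(c_0,c_1,c_2) has size at least (2^n − 2)/(16 n³) (hence redundancy at most 3·log₂ n + 4 up to a vanishing term) and is list-decodable for single-deletion single-substitution with list size 2, i.e., every y ∈ {0,1}^{n−1} lies in the single-deletion single-substitution error ball of at most two codewords of C_n(c_0,c_1,c_2). -/
/-- The bit of `x` at 1-based position `p` (junk value `0` out of range). -/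
def getBit {n : ℕ} (x : Fin n → Fin 2) (p : ℕ) : Fin 2 :=
  if h : p - 1 < n then x ⟨p - 1, h⟩ else 0

/-- Hamming weight of a binary sequence. -/
def wt {n : ℕ} (x : Fin n → Fin 2) : ℕ := ∑ i, (x i : ℕ)

/-- The `j`-th order VT syndrome `f_j(x) = Σ_{i=1}^n (Σ_{ℓ=1}^i ℓ^{j-1}) x_i`. -/
def vtSyn {n : ℕ} (j : ℕ) (x : Fin n → Fin 2) : ℕ :=
  ∑ i : Fin n, (∑ l ∈ Finset.Icc 1 ((i : ℕ) + 1), l ^ (j - 1)) * (x i : ℕ)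

/-- Substitute the symbol at 1-based position `e` of `x` with its complement. -/
def substAt {n : ℕ} (x : Fin n → Fin 2) (e : ℕ) : Fin n → Fin 2 :=
  fun i => if (i : ℕ) + 1 = e then 1 - x i else x i

/-- Delete the symbol at 1-based position `d` of `x`. -/
def delAt {n : ℕ} (x : Fin n → Fin 2) (d : ℕ) : Fin (n - 1) → Fin 2 :=
  fun i => if (i : ℕ) + 1 < d then getBit x ((i : ℕ) + 1) else getBit x ((i : ℕ) + 2)

/-- `E(x,d,e)`: delete the symbol at position `d` and substitute the symbol at
position `e` of `x` (positions are 1-based, taken in the original `x`). -/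
def delSub {n : ℕ} (x : Fin n → Fin 2) (d e : ℕ) : Fin (n - 1) → Fin 2 :=
  delAt (substAt x e) d

/-- The single-deletion single-substitution error ball `B_{1,1}(x)`. -/
def ball {n : ℕ} (x : Fin n → Fin 2) : Set (Fin (n - 1) → Fin 2) :=
  {y | (∃ d ∈ Finset.Icc 1 n, y = delAt x d) ∨
       ∃ d ∈ Finset.Icc 1 n, ∃ e ∈ Finset.Icc 1 n, d ≠ e ∧ y = delSub x d e}

/-- The code `C_n(c0,c1,c2)`. -/
def codeC (n : ℕ) (c0 c1 c2 : ℕ) : Finset (Fin n → Fin 2) :=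
  Finset.univ.filter fun x =>
    x ≠ (fun _ => 0) ∧ x ≠ (fun _ => 1) ∧
    wt x % 4 = c0 ∧ vtSyn 1 x % (2 * n) = c1 ∧ vtSyn 2 x % (2 * n ^ 2) = c2

/-- `u_i = Σ_{ℓ=i}^n x_ℓ − Σ_{ℓ=i}^n x'_ℓ` (1-based positions, value in `ℤ`). -/
def uSeq {n : ℕ} (x x' : Fin n → Fin 2) (i : ℕ) : ℤ :=
  (∑ l ∈ Finset.Icc i n, ((getBit x l : ℕ) : ℤ)) -
    ∑ l ∈ Finset.Icc i n, ((getBit x' l : ℕ) : ℤ)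

/-!
Every `x` whose error ball contains `y` arises from `y` by inserting a bit `β` at some position
`d` and then adding `σ = ±1` at some position `e`. The weight modulo 4 determines `(β, σ)`, and
for fixed `(β, σ)` the changes of `f₁` and `f₂` vary over all admissible `(d, e)` by less than the
moduli `2n` and `2n²`, so for codewords they are known exactly. The first syndrome then forces `e`
as a function of `d`, and the second becomes a function `phi` of `d` alone. A unit step of `d`
changes `(1 - 2β) * phi` either by `0`, in which case the decoded word does not change, or by a
`slope` that is nonincreasing in `d`. So if `phi` takes the same value at `a ≤ b ≤ c`, a nonzero
step on `[a, b)` forces a negative one there, after which every step is `≤ 0`, hence every step on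
`[b, c)` is flat: among three candidate codewords two coincide. The size bound is pigeonhole over
the `16 n³` syndrome triples.
-/

namespace SDSS

open Finset

section Bits

variable {m : ℕ}

def bitZ (x : Fin m → Fin 2) (j : ℕ) : ℤ := (getBit x j : ℕ)

lemma bitZ_eq_zero_or_one (x : Fin m → Fin 2) (j : ℕ) : bitZ x j = 0 ∨ bitZ x j = 1 := by
  have := (getBit x j).isLt
  unfold bitZ
  omega

lemma bitZ_nonneg (x : Fin m → Fin 2) (j : ℕ) : 0 ≤ bitZ x j := by
  rcases bitZ_eq_zero_or_one x j with h | h <;> omega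

lemma bitZ_le_one (x : Fin m → Fin 2) (j : ℕ) : bitZ x j ≤ 1 := by
  rcases bitZ_eq_zero_or_one x j with h | h <;> omega

lemma bitZ_eq_zero_of_lt (x : Fin m → Fin 2) {j : ℕ} (h : m < j) : bitZ x j = 0 := by
  simp [bitZ, getBit, show ¬ j - 1 < m by omega]

lemma getBit_val_add_one (x : Fin m → Fin 2) (i : Fin m) : getBit x (i + 1) = x i := by
  simp [getBit]

lemma ext_of_bitZ {x x' : Fin m → Fin 2} (h : ∀ i ∈ Ioc 0 m, bitZ x i = bitZ x' i) : x = x' := by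
  funext i
  have := h (i + 1) (by simp [mem_Ioc])
  simp only [bitZ, getBit_val_add_one, Nat.cast_inj] at this
  exact Fin.val_injective this

lemma sum_fin_eq_sum_Ioc {M : Type*} [AddCommMonoid M] (f : ℕ → M) :
    ∑ i : Fin m, f (i + 1) = ∑ j ∈ Ioc 0 m, f j := by
  rw [Fin.sum_univ_eq_sum_range (fun i => f (i + 1)), range_eq_Ico, sum_Ico_add',
    Ico_add_one_add_one_eq_Ioc]

lemma wt_eq_sum_bitZ (x : Fin m → Fin 2) : (wt x : ℤ) = ∑ j ∈ Ioc 0 m, bitZ x j := by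
  simp [wt, bitZ, ← sum_fin_eq_sum_Ioc, getBit_val_add_one]

lemma vtSyn_one_eq_sum_bitZ (x : Fin m → Fin 2) :
    (vtSyn 1 x : ℤ) = ∑ j ∈ Ioc 0 m, (j : ℤ) * bitZ x j := by
  simp [vtSyn, bitZ, ← sum_fin_eq_sum_Ioc, getBit_val_add_one]

lemma two_mul_sum_Icc_one (k : ℕ) : 2 * ∑ l ∈ Icc 1 k, (l : ℤ) = k * (k + 1) := by
  induction k with
  | zero => simp
  | succ k ih => rw [sum_Icc_succ_top (by omega), mul_add, ih]; push_cast; ring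

lemma two_mul_vtSyn_two_eq_sum_bitZ (x : Fin m → Fin 2) :
    2 * (vtSyn 2 x : ℤ) = ∑ j ∈ Ioc 0 m, (j : ℤ) * (j + 1) * bitZ x j := by
  simp only [vtSyn, bitZ, ← sum_fin_eq_sum_Ioc, getBit_val_add_one, Nat.cast_sum, mul_sum]
  refine sum_congr rfl fun i _ => ?_
  simp only [Nat.add_one_sub_one, pow_one]
  push_cast
  rw [← mul_assoc, two_mul_sum_Icc_one]
  push_cast
  ring

end Bits

section ErrorModel

variable {m n : ℕ}

def insertBit (y : Fin m → Fin 2) (d : ℕ) (β : ℤ) (i : ℕ) : ℤ :=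
  if i < d then bitZ y i else if i = d then β else bitZ y (i - 1)

/-- `y` with `β` inserted at position `d`, then `σ = ±1` added at position `e` (a flip); a single
deletion is the case `e = d`. -/
def flipInsert (y : Fin m → Fin 2) (d : ℕ) (β e σ : ℤ) (i : ℕ) : ℤ :=
  insertBit y d β i + if (i : ℤ) = e then σ else 0

structure IsInsertFlip (y : Fin (n - 1) → Fin 2) (x : Fin n → Fin 2) (d e : ℕ) (β σ : ℤ) :
    Prop where
  d_mem : d ∈ Icc 1 n
  e_mem : e ∈ Icc 1 n
  β_mem : β = 0 ∨ β = 1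
  σ_mem : σ = 1 ∨ σ = -1
  bitZ_eq : ∀ i ∈ Ioc 0 n, bitZ x i = flipInsert y d β e σ i

lemma bitZ_delAt (z : Fin n → Fin 2) (d : ℕ) {j : ℕ} (hj : j ∈ Ioc 0 (n - 1)) :
    bitZ (delAt z d) j = if j < d then bitZ z j else bitZ z (j + 1) := by
  rw [mem_Ioc] at hj
  have hj' : j - 1 < n - 1 := by omega
  simp only [bitZ, getBit, delAt, dif_pos hj', Nat.sub_add_cancel hj.1,
    show j - 1 + 2 = j + 1 by omega]
  split_ifs <;> rfl

lemma bitZ_substAt (z : Fin n → Fin 2) (e : ℕ) {j : ℕ} (hj : j ∈ Ioc 0 n) :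
    bitZ (substAt z e) j = if j = e then 1 - bitZ z j else bitZ z j := by
  rw [mem_Ioc] at hj
  simp only [bitZ, getBit, substAt, dif_pos (show j - 1 < n by omega), Nat.sub_add_cancel hj.1]
  split_ifs
  · rcases Fin.exists_fin_two.mp ⟨z ⟨j - 1, _⟩, rfl⟩ with h | h <;> rw [h] <;> decide
  · rfl

lemma bitZ_eq_insertBit_delAt (z : Fin n → Fin 2) {d : ℕ} (hd : d ∈ Icc 1 n) {i : ℕ}
    (hi : i ∈ Ioc 0 n) : bitZ z i = insertBit (delAt z d) d (bitZ z d) i := by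
  rw [mem_Icc] at hd
  rw [mem_Ioc] at hi
  unfold insertBit
  split_ifs with h₁ h₂
  · rw [bitZ_delAt z d (by rw [mem_Ioc]; omega), if_pos h₁]
  · rw [h₂]
  · rw [bitZ_delAt z d (by rw [mem_Ioc]; omega), if_neg (by omega), Nat.sub_add_cancel (by omega)]

lemma exists_isInsertFlip_of_mem_ball {y : Fin (n - 1) → Fin 2} {x : Fin n → Fin 2}
    (h : y ∈ ball x) : ∃ d e β σ, IsInsertFlip y x d e β σ := by
  rcases h with ⟨d, hd, rfl⟩ | ⟨d, hd, e, he, -, rfl⟩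
  · refine ⟨d, d, 1 - bitZ x d, 2 * bitZ x d - 1, hd, hd, ?_, ?_, fun i hi => ?_⟩
    · have := bitZ_eq_zero_or_one x d
      omega
    · have := bitZ_eq_zero_or_one x d
      omega
    · simp only [bitZ_eq_insertBit_delAt x hd hi, flipInsert, Nat.cast_inj]
      unfold insertBit
      split_ifs <;> omega
  · set z := substAt x e
    refine ⟨d, e, bitZ z d, 1 - 2 * bitZ z e, hd, he, bitZ_eq_zero_or_one z d, ?_, fun i hi => ?_⟩
    · have := bitZ_eq_zero_or_one z e
      omega
    · have hz : bitZ z i = _ := bitZ_substAt x e hi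
      have hy : bitZ z i = insertBit (delSub x d e) d (bitZ z d) i :=
        bitZ_eq_insertBit_delAt z hd hi
      simp only [flipInsert, ← hy, Nat.cast_inj]
      split_ifs at hz ⊢ with h₁ <;> (try subst h₁) <;> omega

end ErrorModel

section Syndromes

variable {m n : ℕ}

def suffixWt (y : Fin m → Fin 2) (d : ℕ) : ℤ := ∑ l ∈ Ioc d m, bitZ y l

def suffixMoment (y : Fin m → Fin 2) (d : ℕ) : ℤ := ∑ l ∈ Ioc d m, (l : ℤ) * bitZ y l

lemma sum_Ioc_pred_mul_bitZ (y : Fin m → Fin 2) (c : ℕ → ℤ) {a : ℕ} (ha : 1 ≤ a) :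
    ∑ l ∈ Ioc (a - 1) m, c l * bitZ y l = c a * bitZ y a + ∑ l ∈ Ioc a m, c l * bitZ y l := by
  by_cases ham : a ≤ m
  · rw [← sum_insert (f := fun l => c l * bitZ y l) (by simp)]
    congr 1
    ext l
    simp only [mem_Ioc, mem_insert]
    omega
  · simp [bitZ_eq_zero_of_lt y (not_le.mp ham), Ioc_eq_empty_of_le (show m ≤ a - 1 by omega),
      Ioc_eq_empty_of_le (show m ≤ a by omega)]

lemma suffixWt_pred (y : Fin m → Fin 2) {a : ℕ} (ha : 1 ≤ a) :
    suffixWt y (a - 1) = bitZ y a + suffixWt y a := by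
  simpa [suffixWt] using sum_Ioc_pred_mul_bitZ y 1 ha

lemma suffixMoment_pred (y : Fin m → Fin 2) {a : ℕ} (ha : 1 ≤ a) :
    suffixMoment y (a - 1) = a * bitZ y a + suffixMoment y a :=
  sum_Ioc_pred_mul_bitZ y (fun l => (l : ℤ)) ha

lemma sum_Ioc_add_one (f : ℕ → ℤ) (a b : ℕ) :
    ∑ j ∈ Ioc a b, f (j + 1) = ∑ j ∈ Ioc (a + 1) (b + 1), f j := by
  rw [← map_add_right_Ioc, sum_map]
  rfl

lemma sum_mul_insertBit (y : Fin (n - 1) → Fin 2) (c : ℕ → ℤ) {d : ℕ} (hd : d ∈ Icc 1 n)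
    (β : ℤ) :
    ∑ j ∈ Ioc 0 n, c j * insertBit y d β j
      = ∑ j ∈ Ioc 0 (n - 1), c j * bitZ y j
        + ∑ j ∈ Ioc (d - 1) (n - 1), (c (j + 1) - c j) * bitZ y j + c d * β := by
  rw [mem_Icc] at hd
  have h_lt : ∑ j ∈ Ioc 0 (d - 1), c j * insertBit y d β j = ∑ j ∈ Ioc 0 (d - 1), c j * bitZ y j :=
    sum_congr rfl fun j hj => by rw [mem_Ioc] at hj; rw [insertBit, if_pos (by omega)]
  have h_eq : ∑ j ∈ Ioc (d - 1) d, c j * insertBit y d β j = c d * β := by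
    rw [show Ioc (d - 1) d = {d} by ext; simp; omega, sum_singleton, insertBit, if_neg (by omega),
      if_pos rfl]
  have h_gt : ∑ j ∈ Ioc d n, c j * insertBit y d β j
      = ∑ j ∈ Ioc (d - 1) (n - 1), c (j + 1) * bitZ y j := by
    have h := sum_Ioc_add_one (fun j => c j * bitZ y (j - 1)) (d - 1) (n - 1)
    simp only [Nat.add_sub_cancel, Nat.sub_add_cancel hd.1,
      Nat.sub_add_cancel (show 1 ≤ n by omega)] at h
    rw [h]
    exact sum_congr rfl fun j hj => by
      rw [mem_Ioc] at hj; rw [insertBit, if_neg (by omega), if_neg (by omega)]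
  rw [← sum_Ioc_consecutive _ (Nat.zero_le d) hd.2,
    ← sum_Ioc_consecutive _ (Nat.zero_le (d - 1)) (show d - 1 ≤ d by omega), h_lt, h_eq, h_gt,
    ← sum_Ioc_consecutive _ (Nat.zero_le (d - 1)) (show d - 1 ≤ n - 1 by omega)]
  simp only [sub_mul, sum_sub_distrib]
  ring

lemma suffixWt_nonneg (y : Fin m → Fin 2) (k : ℕ) : 0 ≤ suffixWt y k :=
  sum_nonneg fun l _ => bitZ_nonneg y l

lemma suffixWt_le (y : Fin m → Fin 2) (k : ℕ) : suffixWt y k ≤ ((m - k : ℕ) : ℤ) := by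
  have := sum_le_card_nsmul (Ioc k m) (bitZ y) 1 fun l _ => bitZ_le_one y l
  rw [Nat.card_Ioc, nsmul_one] at this
  exact this

lemma two_mul_suffixMoment_add_nonneg (y : Fin m → Fin 2) (k : ℕ) :
    0 ≤ 2 * suffixMoment y k + 2 * suffixWt y k := by
  have : 0 ≤ suffixMoment y k := sum_nonneg fun l _ => mul_nonneg (by positivity) (bitZ_nonneg y l)
  linarith [suffixWt_nonneg y k]

lemma two_mul_suffixMoment_add_le (y : Fin m → Fin 2) (k : ℕ) :
    2 * suffixMoment y k + 2 * suffixWt y k ≤ (m : ℤ) * (m + 3) := calc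
  2 * suffixMoment y k + 2 * suffixWt y k = ∑ l ∈ Ioc k m, (2 * (l : ℤ) + 2) * bitZ y l := by
    simp only [suffixMoment, suffixWt, mul_sum, ← sum_add_distrib]
    exact sum_congr rfl fun l _ => by ring
  _ ≤ ∑ l ∈ Ioc 0 m, (2 * (l : ℤ) + 2) := by
    refine (sum_le_sum fun l _ => ?_).trans
      (sum_le_sum_of_subset_of_nonneg (Ioc_subset_Ioc_left (Nat.zero_le k)) fun l _ _ => ?_)
    · nlinarith [bitZ_le_one y l, bitZ_nonneg y l, (Nat.cast_nonneg l : (0 : ℤ) ≤ l)]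
    · positivity
  _ = (m : ℤ) * (m + 3) := by
    rw [sum_add_distrib, ← mul_sum, ← Icc_add_one_left_eq_Ioc, zero_add, two_mul_sum_Icc_one]
    simp
    ring

def syn1Shift (y : Fin m → Fin 2) (d : ℕ) (e β σ : ℤ) : ℤ :=
  suffixWt y (d - 1) + β * d + σ * e

def syn2Shift (y : Fin m → Fin 2) (d : ℕ) (e β σ : ℤ) : ℤ :=
  2 * suffixMoment y (d - 1) + 2 * suffixWt y (d - 1) + β * (d * (d + 1)) + σ * (e * (e + 1))

namespace IsInsertFlip

variable {y : Fin (n - 1) → Fin 2} {x : Fin n → Fin 2} {d e : ℕ} {β σ : ℤ}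

lemma sum_mul_bitZ (h : IsInsertFlip y x d e β σ) (c : ℕ → ℤ) :
    ∑ j ∈ Ioc 0 n, c j * bitZ x j
      = ∑ j ∈ Ioc 0 (n - 1), c j * bitZ y j
        + ∑ j ∈ Ioc (d - 1) (n - 1), (c (j + 1) - c j) * bitZ y j + c d * β + c e * σ := by
  have he : e ∈ Ioc 0 n := by have := h.e_mem; simp only [mem_Icc, mem_Ioc] at this ⊢; omega
  rw [sum_congr rfl fun j hj => by rw [h.bitZ_eq j hj], ← sum_mul_insertBit y c h.d_mem β]
  simp [flipInsert, mul_add, sum_add_distrib, he]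

lemma wt_eq (h : IsInsertFlip y x d e β σ) : (wt x : ℤ) = wt y + β + σ := by
  simpa [wt_eq_sum_bitZ] using h.sum_mul_bitZ 1

lemma vtSyn_one_eq (h : IsInsertFlip y x d e β σ) :
    (vtSyn 1 x : ℤ) = vtSyn 1 y + syn1Shift y d e β σ := by
  have := h.sum_mul_bitZ (fun j => j)
  simp only [Nat.cast_add, Nat.cast_one, add_sub_cancel_left, one_mul] at this
  rw [vtSyn_one_eq_sum_bitZ, vtSyn_one_eq_sum_bitZ, this, syn1Shift, suffixWt]
  ring

lemma two_mul_vtSyn_two_eq (h : IsInsertFlip y x d e β σ) :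
    2 * (vtSyn 2 x : ℤ) = 2 * vtSyn 2 y + syn2Shift y d e β σ := by
  have hc : ∑ j ∈ Ioc (d - 1) (n - 1),
        (((j + 1 : ℕ) : ℤ) * ((j + 1 : ℕ) + 1) - j * (j + 1)) * bitZ y j
      = 2 * suffixMoment y (d - 1) + 2 * suffixWt y (d - 1) := by
    simp only [suffixMoment, suffixWt, mul_sum, ← sum_add_distrib]
    exact sum_congr rfl fun j _ => by push_cast; ring
  rw [two_mul_vtSyn_two_eq_sum_bitZ, two_mul_vtSyn_two_eq_sum_bitZ,
    h.sum_mul_bitZ (fun j => j * (j + 1)), hc, syn2Shift]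
  ring

end IsInsertFlip

end Syndromes

section Congruences

variable {n : ℕ} {y : Fin (n - 1) → Fin 2} {x₁ x₂ : Fin n → Fin 2} {d₁ e₁ d₂ e₂ : ℕ}
  {β σ β₁ σ₁ β₂ σ₂ : ℤ}

lemma IsInsertFlip.eq_of_wt_modEq (h₁ : IsInsertFlip y x₁ d₁ e₁ β₁ σ₁)
    (h₂ : IsInsertFlip y x₂ d₂ e₂ β₂ σ₂) (hw : wt x₁ ≡ wt x₂ [MOD 4]) : β₁ = β₂ ∧ σ₁ = σ₂ := by
  -- `β + σ` takes the values `-1, 0, 1, 2`, pairwise distinct mod 4, each for a single `(β, σ)`.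
  have := Nat.modEq_iff_dvd.mp hw
  have := h₁.wt_eq
  have := h₂.wt_eq
  have := h₁.β_mem
  have := h₂.β_mem
  have := h₁.σ_mem
  have := h₂.σ_mem
  push_cast at *
  omega

lemma abs_syn1Shift_sub_lt (hd₁ : d₁ ∈ Icc 1 n) (hd₂ : d₂ ∈ Icc 1 n) (he₁ : e₁ ∈ Icc 1 n)
    (he₂ : e₂ ∈ Icc 1 n) (hβ : β = 0 ∨ β = 1) (hσ : σ = 1 ∨ σ = -1) :
    |syn1Shift y d₁ e₁ β σ - syn1Shift y d₂ e₂ β σ| < 2 * n := by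
  simp only [mem_Icc] at hd₁ hd₂ he₁ he₂
  have := suffixWt_le y (d₁ - 1)
  have := suffixWt_le y (d₂ - 1)
  have := suffixWt_nonneg y (d₁ - 1)
  have := suffixWt_nonneg y (d₂ - 1)
  rw [syn1Shift, syn1Shift, abs_lt]
  rcases hβ with rfl | rfl <;> rcases hσ with rfl | rfl <;> constructor <;> omega

lemma abs_syn2Shift_sub_lt (hd₁ : d₁ ∈ Icc 1 n) (hd₂ : d₂ ∈ Icc 1 n) (he₁ : e₁ ∈ Icc 1 n)
    (he₂ : e₂ ∈ Icc 1 n) (hβ : β = 0 ∨ β = 1) (hσ : σ = 1 ∨ σ = -1) :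
    |syn2Shift y d₁ e₁ β σ - syn2Shift y d₂ e₂ β σ| < 4 * n ^ 2 := by
  have hT : ∀ k ∈ Icc 1 n, (2 : ℤ) ≤ k * (k + 1) ∧ (k : ℤ) * (k + 1) ≤ n * (n + 1) := by
    intro k hk
    rw [mem_Icc] at hk
    have : (1 : ℤ) ≤ k := by exact_mod_cast hk.1
    have : (k : ℤ) ≤ n := by exact_mod_cast hk.2
    constructor <;> nlinarith
  have hn : (1 : ℤ) ≤ n := by have := (mem_Icc.mp hd₁); exact_mod_cast this.1.trans this.2
  have hm : ((n - 1 : ℕ) : ℤ) = n - 1 := by omega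
  have b₁ := two_mul_suffixMoment_add_le y (d₁ - 1)
  have b₂ := two_mul_suffixMoment_add_le y (d₂ - 1)
  have c₁ := two_mul_suffixMoment_add_nonneg y (d₁ - 1)
  have c₂ := two_mul_suffixMoment_add_nonneg y (d₂ - 1)
  rw [hm] at b₁ b₂
  have t₁ := hT d₁ hd₁
  have t₂ := hT d₂ hd₂
  have t₃ := hT e₁ he₁
  have t₄ := hT e₂ he₂
  have : 3 * ((n - 1 : ℤ) * (n - 1 + 3)) < 4 * n ^ 2 := by nlinarith
  rw [syn2Shift, syn2Shift, abs_lt]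
  rcases hβ with rfl | rfl <;> rcases hσ with rfl | rfl <;> constructor <;> linarith

lemma IsInsertFlip.vtSyn_one_eq_of_modEq (h₁ : IsInsertFlip y x₁ d₁ e₁ β σ)
    (h₂ : IsInsertFlip y x₂ d₂ e₂ β σ) (h : vtSyn 1 x₁ ≡ vtSyn 1 x₂ [MOD 2 * n]) :
    vtSyn 1 x₁ = vtSyn 1 x₂ := by
  refine h.eq_of_abs_lt ?_
  rw [h₂.vtSyn_one_eq, h₁.vtSyn_one_eq, add_sub_add_left_eq_sub]
  exact_mod_cast abs_syn1Shift_sub_lt h₂.d_mem h₁.d_mem h₂.e_mem h₁.e_mem h₁.β_mem h₁.σ_mem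

lemma IsInsertFlip.vtSyn_two_eq_of_modEq (h₁ : IsInsertFlip y x₁ d₁ e₁ β σ)
    (h₂ : IsInsertFlip y x₂ d₂ e₂ β σ) (h : vtSyn 2 x₁ ≡ vtSyn 2 x₂ [MOD 2 * n ^ 2]) :
    vtSyn 2 x₁ = vtSyn 2 x₂ := by
  refine h.eq_of_abs_lt ?_
  have := abs_syn2Shift_sub_lt (y := y) h₂.d_mem h₁.d_mem h₂.e_mem h₁.e_mem h₁.β_mem h₁.σ_mem
  rw [← add_sub_add_left_eq_sub _ _ (2 * (vtSyn 2 y : ℤ)), ← h₁.two_mul_vtSyn_two_eq,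
    ← h₂.two_mul_vtSyn_two_eq, ← mul_sub, abs_mul, abs_two] at this
  push_cast
  linarith

end Congruences

lemma flat_or_flat_of_increments {F g : ℕ → ℤ} {a b c : ℕ}
    (hF : ∀ δ ∈ Ico a c, F (δ + 1) - F δ = 0 ∨ F (δ + 1) - F δ = g δ)
    (hg : AntitoneOn g (Set.Ici a)) (hab : a ≤ b) (hbc : b ≤ c) (h₁ : F a = F b)
    (h₂ : F b = F c) :
    (∀ δ ∈ Ico a b, F (δ + 1) = F δ) ∨ ∀ δ ∈ Ico b c, F (δ + 1) = F δ := by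
  refine or_iff_not_imp_left.mpr fun hflat => ?_
  push Not at hflat
  obtain ⟨t, ht, hFt⟩ := hflat
  have hac : ∀ {δ}, δ ∈ Ico a b ∨ δ ∈ Ico b c → δ ∈ Ico a c := by
    intro δ h; simp only [mem_Ico] at h ⊢; omega
  obtain ⟨v, hv, hv_neg⟩ : ∃ v ∈ Ico a b, F (v + 1) - F v < 0 := by
    by_contra! h
    have hsum : ∑ δ ∈ Ico a b, (F (δ + 1) - F δ) = 0 := by rw [sum_Ico_sub F hab, h₁, sub_self]
    exact hFt (sub_eq_zero.mp ((sum_eq_zero_iff_of_nonneg h).mp hsum t ht))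
  have hgv : g v < 0 := ((hF v (hac (.inl hv))).resolve_left hv_neg.ne) ▸ hv_neg
  have hnonpos : ∀ δ ∈ Ico b c, F (δ + 1) - F δ ≤ 0 := fun δ hδ => by
    rcases hF δ (hac (.inr hδ)) with h | h
    · exact h.le
    · rw [h]
      simp only [mem_Ico] at hv hδ
      exact (hg (Set.mem_Ici.mpr hv.1) (Set.mem_Ici.mpr (by omega)) (by omega)).trans hgv.le
  have hsum : ∑ δ ∈ Ico b c, (F (δ + 1) - F δ) = 0 := by rw [sum_Ico_sub F hbc, h₂, sub_self]
  exact fun δ hδ => sub_eq_zero.mp ((sum_eq_zero_iff_of_nonpos hnonpos).mp hsum δ hδ)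

section Core

variable {m : ℕ} (y : Fin m → Fin 2) (β σ A : ℤ)

/-- The flip position forced by `syn1Shift y δ e β σ = A`. -/
def flipPos (δ : ℕ) : ℤ := σ * (A - suffixWt y (δ - 1) - β * δ)

def phi (δ : ℕ) : ℤ := syn2Shift y δ (flipPos y β σ A δ) β σ

def candidate (δ : ℕ) : ℕ → ℤ := flipInsert y δ β (flipPos y β σ A δ) σ

def slope (δ : ℕ) : ℤ := 2 * (flipPos y β σ A δ - δ) - 1 + σ * (1 - 2 * β)

variable {y β σ A}

lemma flipPos_succ {δ : ℕ} (hδ : 1 ≤ δ) :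
    flipPos y β σ A (δ + 1) = flipPos y β σ A δ + σ * (bitZ y δ - β) := by
  rw [flipPos, flipPos, Nat.add_sub_cancel, suffixWt_pred y hδ]
  push_cast
  ring

lemma candidate_succ (hβ : β = 0 ∨ β = 1) (hσ : σ = 1 ∨ σ = -1) {δ : ℕ} (hδ : 1 ≤ δ)
    (h : bitZ y δ = β ∨ slope y β σ A δ = 0) :
    candidate y β σ A (δ + 1) = candidate y β σ A δ := by
  funext i
  have hb := bitZ_eq_zero_or_one y δ
  have hp := flipPos_succ (y := y) (A := A) (β := β) (σ := σ) hδ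
  simp only [candidate, flipInsert, insertBit, hp]
  simp only [slope] at h
  by_cases hi : i = δ + 1
  · subst hi
    simp only [Nat.add_sub_cancel]
    grind
  · grind

lemma one_sub_two_mul_mul_phi_succ_sub (hβ : β = 0 ∨ β = 1) (hσ : σ = 1 ∨ σ = -1) {δ : ℕ}
    (hδ : 1 ≤ δ) :
    (1 - 2 * β) * (phi y β σ A (δ + 1) - phi y β σ A δ)
      = if bitZ y δ = β then 0 else slope y β σ A δ := by
  simp only [phi, syn2Shift, slope, flipPos_succ hδ, Nat.add_sub_cancel, suffixWt_pred y hδ,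
    suffixMoment_pred y hδ]
  rcases bitZ_eq_zero_or_one y δ with hb | hb <;> rcases hβ with rfl | rfl <;>
    rcases hσ with rfl | rfl <;> simp [hb] <;> ring

lemma slope_antitoneOn (hβ : β = 0 ∨ β = 1) (hσ : σ = 1 ∨ σ = -1) :
    AntitoneOn (slope y β σ A) (Set.Ici 1) := by
  refine antitoneOn_nat_Ici_of_succ_le fun δ hδ => ?_
  simp only [slope, flipPos_succ hδ]
  have := bitZ_eq_zero_or_one y δ
  push_cast
  rcases hβ with rfl | rfl <;> rcases hσ with rfl | rfl <;> omega

lemma candidate_eq_of_flat (hβ : β = 0 ∨ β = 1) (hσ : σ = 1 ∨ σ = -1) {a b : ℕ} (ha : 1 ≤ a)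
    (hab : a ≤ b) (hflat : ∀ δ ∈ Ico a b, phi y β σ A (δ + 1) = phi y β σ A δ) :
    candidate y β σ A b = candidate y β σ A a := by
  induction b, hab using Nat.le_induction with
  | base => rfl
  | succ b hab ih =>
    have hstep := one_sub_two_mul_mul_phi_succ_sub (y := y) (A := A) hβ hσ (ha.trans hab)
    rw [hflat b (by simp [hab]), sub_self, mul_zero] at hstep
    rw [candidate_succ hβ hσ (ha.trans hab) ?_, ih fun δ hδ => hflat δ ?_]
    · simp only [mem_Ico] at hδ ⊢; omega
    · split_ifs at hstep with h
      exacts [.inl h, .inr hstep.symm]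

lemma candidate_eq_or_eq (hβ : β = 0 ∨ β = 1) (hσ : σ = 1 ∨ σ = -1) {a b c : ℕ} (ha : 1 ≤ a)
    (hab : a ≤ b) (hbc : b ≤ c) (h₁ : phi y β σ A a = phi y β σ A b)
    (h₂ : phi y β σ A b = phi y β σ A c) :
    candidate y β σ A a = candidate y β σ A b ∨ candidate y β σ A b = candidate y β σ A c := by
  have hε : 1 - 2 * β ≠ 0 := by omega
  have key := flat_or_flat_of_increments (F := fun δ => (1 - 2 * β) * phi y β σ A δ)
    (g := slope y β σ A) (fun δ hδ => ?_)
    ((slope_antitoneOn hβ hσ).mono (Set.Ici_subset_Ici.mpr ha))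
    hab hbc (by simp only [h₁]) (by simp only [h₂])
  · simp only [mul_right_inj' hε] at key
    exact key.imp (fun h => (candidate_eq_of_flat hβ hσ ha hab h).symm)
      fun h => (candidate_eq_of_flat hβ hσ (ha.trans hab) hbc h).symm
  · rw [← mul_sub, one_sub_two_mul_mul_phi_succ_sub hβ hσ (ha.trans (mem_Ico.mp hδ).1)]
    split_ifs <;> simp

lemma candidate_eq_or_eq_or_eq (hβ : β = 0 ∨ β = 1) (hσ : σ = 1 ∨ σ = -1) {a b c : ℕ}
    (ha : 1 ≤ a) (hb : 1 ≤ b) (hc : 1 ≤ c) {v : ℤ} (hav : phi y β σ A a = v)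
    (hbv : phi y β σ A b = v) (hcv : phi y β σ A c = v) :
    candidate y β σ A a = candidate y β σ A b ∨ candidate y β σ A a = candidate y β σ A c ∨
      candidate y β σ A b = candidate y β σ A c := by
  have H : ∀ {p q r : ℕ}, 1 ≤ p → p ≤ q → q ≤ r → phi y β σ A p = v → phi y β σ A q = v →
      phi y β σ A r = v →
      candidate y β σ A p = candidate y β σ A q ∨ candidate y β σ A q = candidate y β σ A r :=
    fun hp hpq hqr hpv hqv hrv =>
      candidate_eq_or_eq hβ hσ hp hpq hqr (hpv.trans hqv.symm) (hqv.trans hrv.symm)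
  rcases le_total a b with hab | hba
  · rcases le_total b c with hbc | hcb
    · have := H ha hab hbc hav hbv hcv; grind
    · rcases le_total a c with hac | hca
      · have := H ha hac hcb hav hcv hbv; grind
      · have := H hc hca hab hcv hav hbv; grind
  · rcases le_total a c with hac | hca
    · have := H hb hba hac hbv hav hcv; grind
    · rcases le_total b c with hbc | hcb
      · have := H hb hbc hca hbv hcv hav; grind
      · have := H hc hcb hba hcv hbv hav; grind

end Core

section ListDecoding

variable {n : ℕ} {y : Fin (n - 1) → Fin 2} {x x₁ x₂ : Fin n → Fin 2} {d e d₁ e₁ d₂ e₂ : ℕ}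
  {β σ β₁ σ₁ β₂ σ₂ A : ℤ}

namespace IsInsertFlip

lemma flipPos_eq (h : IsInsertFlip y x d e β σ) (hA : syn1Shift y d e β σ = A) :
    flipPos y β σ A d = e := by
  rw [flipPos, ← hA, syn1Shift]
  rcases h.σ_mem with rfl | rfl <;> ring

lemma bitZ_eq_candidate (h : IsInsertFlip y x d e β σ) (hA : syn1Shift y d e β σ = A) :
    ∀ i ∈ Ioc 0 n, bitZ x i = candidate y β σ A d i := by
  rw [candidate, h.flipPos_eq hA]
  exact h.bitZ_eq

lemma phi_eq (h : IsInsertFlip y x d e β σ) (hA : syn1Shift y d e β σ = A) :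
    phi y β σ A d = 2 * vtSyn 2 x - 2 * vtSyn 2 y := by
  rw [phi, h.flipPos_eq hA, h.two_mul_vtSyn_two_eq]
  ring

lemma eq_of_candidate_eq (h₁ : IsInsertFlip y x₁ d₁ e₁ β σ) (h₂ : IsInsertFlip y x₂ d₂ e₂ β σ)
    (hA₁ : syn1Shift y d₁ e₁ β σ = A) (hA₂ : syn1Shift y d₂ e₂ β σ = A)
    (hc : candidate y β σ A d₁ = candidate y β σ A d₂) : x₁ = x₂ :=
  ext_of_bitZ fun i hi => by rw [h₁.bitZ_eq_candidate hA₁ i hi, h₂.bitZ_eq_candidate hA₂ i hi, hc]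

lemma one_le_d (h : IsInsertFlip y x d e β σ) : 1 ≤ d := (mem_Icc.mp h.d_mem).1

lemma eq_of_mem_codeC {c0 c1 c2 : ℕ} (h₁ : IsInsertFlip y x₁ d₁ e₁ β₁ σ₁)
    (h₂ : IsInsertFlip y x₂ d₂ e₂ β₂ σ₂) (hx₁ : x₁ ∈ codeC n c0 c1 c2)
    (hx₂ : x₂ ∈ codeC n c0 c1 c2) :
    β₁ = β₂ ∧ σ₁ = σ₂ ∧ syn1Shift y d₁ e₁ β₁ σ₁ = syn1Shift y d₂ e₂ β₂ σ₂ ∧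
      vtSyn 2 x₁ = vtSyn 2 x₂ := by
  simp only [codeC, mem_filter] at hx₁ hx₂
  obtain ⟨rfl, rfl⟩ := h₁.eq_of_wt_modEq h₂ (hx₁.2.2.2.1.trans hx₂.2.2.2.1.symm)
  have hf₁ := h₁.vtSyn_one_eq_of_modEq h₂ (hx₁.2.2.2.2.1.trans hx₂.2.2.2.2.1.symm)
  refine ⟨rfl, rfl, ?_, h₁.vtSyn_two_eq_of_modEq h₂ (hx₁.2.2.2.2.2.trans hx₂.2.2.2.2.2.symm)⟩
  have := h₁.vtSyn_one_eq
  rw [hf₁, h₂.vtSyn_one_eq] at this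
  omega

end IsInsertFlip

theorem ncard_codeC_ball_le_two (c0 c1 c2 : ℕ) (y : Fin (n - 1) → Fin 2) :
    {x : Fin n → Fin 2 | x ∈ codeC n c0 c1 c2 ∧ y ∈ ball x}.ncard ≤ 2 := by
  by_contra! h
  obtain ⟨x₁, ⟨hc₁, hb₁⟩, x₂, ⟨hc₂, hb₂⟩, x₃, ⟨hc₃, hb₃⟩, h₁₂, h₁₃, h₂₃⟩ :=
    (Set.two_lt_ncard (Set.toFinite _)).mp h
  obtain ⟨d₁, e₁, β, σ, r₁⟩ := exists_isInsertFlip_of_mem_ball hb₁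
  obtain ⟨d₂, e₂, β₂, σ₂, r₂⟩ := exists_isInsertFlip_of_mem_ball hb₂
  obtain ⟨d₃, e₃, β₃, σ₃, r₃⟩ := exists_isInsertFlip_of_mem_ball hb₃
  obtain ⟨rfl, rfl, hA₂, hf₂⟩ := r₁.eq_of_mem_codeC r₂ hc₁ hc₂
  obtain ⟨rfl, rfl, hA₃, hf₃⟩ := r₁.eq_of_mem_codeC r₃ hc₁ hc₃
  have hphi₂ := r₂.phi_eq hA₂.symm
  have hphi₃ := r₃.phi_eq hA₃.symm
  rw [← hf₂] at hphi₂
  rw [← hf₃] at hphi₃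
  rcases candidate_eq_or_eq_or_eq r₁.β_mem r₁.σ_mem r₁.one_le_d r₂.one_le_d r₃.one_le_d
    (r₁.phi_eq rfl) hphi₂ hphi₃ with hc | hc | hc
  · exact h₁₂ (r₁.eq_of_candidate_eq r₂ rfl hA₂.symm hc)
  · exact h₁₃ (r₁.eq_of_candidate_eq r₃ rfl hA₃.symm hc)
  · exact h₂₃ (r₂.eq_of_candidate_eq r₃ hA₂.symm hA₃.symm hc)

end ListDecoding

section Size

variable {n : ℕ}

lemma card_filter_ne_const (hn : 0 < n) :
    ((univ.filter fun x : Fin n → Fin 2 => x ≠ (fun _ => 0) ∧ x ≠ (fun _ => 1)).card : ℝ)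
      = 2 ^ n - 2 := by
  have h01 : (fun _ => 0 : Fin n → Fin 2) ≠ fun _ => 1 := fun h => by
    simpa using congrFun h ⟨0, hn⟩
  have hs : (univ.filter fun x : Fin n → Fin 2 => x ≠ (fun _ => 0) ∧ x ≠ (fun _ => 1))
      = univ \ {fun _ => 0, fun _ => 1} := by
    ext x
    simp
  rw [hs, card_sdiff_of_subset (subset_univ _), card_pair h01, Nat.cast_sub, card_univ,
    Fintype.card_fun]
  · simp
  · simp [Nat.one_lt_two_pow_iff.mpr hn.ne', Nat.succ_le_of_lt]

lemma exists_card_codeC_ge (hn : 0 < n) :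
    ∃ c0 c1 c2 : ℕ, c0 < 4 ∧ c1 < 2 * n ∧ c2 < 2 * n ^ 2 ∧
      (2 ^ n - 2 : ℝ) / (16 * (n : ℝ) ^ 3) ≤ (codeC n c0 c1 c2).card := by
  let s := univ.filter fun x : Fin n → Fin 2 => x ≠ (fun _ => 0) ∧ x ≠ (fun _ => 1)
  let t := range 4 ×ˢ range (2 * n) ×ˢ range (2 * n ^ 2)
  let syndromes (x : Fin n → Fin 2) : ℕ × ℕ × ℕ :=
    (wt x % 4, vtSyn 1 x % (2 * n), vtSyn 2 x % (2 * n ^ 2))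
  have hs : (s.card : ℝ) = 2 ^ n - 2 := card_filter_ne_const hn
  have hb : t.card • ((2 ^ n - 2 : ℝ) / (16 * (n : ℝ) ^ 3)) ≤ s.card := by
    simp only [t, hs, card_product, card_range, nsmul_eq_mul]
    push_cast
    field_simp
    linarith
  obtain ⟨⟨c0, c1, c2⟩, hc, hcard⟩ := exists_le_card_fiber_of_nsmul_le_card_of_maps_to
    (f := syndromes) (fun x _ => by simp [t, syndromes, Nat.mod_lt, hn])
    ⟨(0, 0, 0), by simp [t, hn]⟩ hb
  simp only [t, mem_product, mem_range] at hc
  refine ⟨c0, c1, c2, hc.1, hc.2.1, hc.2.2, hcard.trans_eq ?_⟩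
  congr 2
  ext x
  simp [s, codeC, syndromes, and_assoc]

end Size

end SDSS

/-- there is a choice of `(c0,c1,c2)` for which `C_n(c0,c1,c2)` has
size at least `(2^n - 2)/(16 n^3)` and is list-decodable for single-deletion
single-substitution with list size 2. -/
theorem stmt0 (n : ℕ) (hn : 2 ≤ n) :
    ∃ c0 c1 c2 : ℕ, c0 < 4 ∧ c1 < 2 * n ∧ c2 < 2 * n ^ 2 ∧
      ((2 ^ n - 2 : ℝ) / (16 * (n : ℝ) ^ 3) ≤ ((codeC n c0 c1 c2).card : ℝ)) ∧
      ∀ y : Fin (n - 1) → Fin 2,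
        {x : Fin n → Fin 2 | x ∈ codeC n c0 c1 c2 ∧ y ∈ ball x}.ncard ≤ 2 := by
  obtain ⟨c0, c1, c2, h0, h1, h2, hcard⟩ := SDSS.exists_card_codeC_ge (by omega : 0 < n)
  exact ⟨c0, c1, c2, h0, h1, h2, hcard, SDSS.ncard_codeC_ball_le_two c0 c1 c2⟩
end

section
/- Let n ≥ 2, (c_0, c_1, c_2) ∈ Z_4 × Z_{2n} × Z_{2n²}, and suppose x, x' ∈ C_n(c_0,c_1,c_2) with x ≠ x'. Suppose d_1, e_1, d_2, e_2 ∈ {1,…,n} with d_1 ≠ e_1, d_2 ≠ e_2, d_1 ≤ d_2, and E(x, d_1, e_1) = E(x', d_2, e_2). Then d_1 < e_1 ≤ d_2 and d_1 ≤ e_2 < d_2. -/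
/-!
Put `a = substAt x e₁` and `b = substAt x' e₂`. Since deleting position `d₁` of `a` and
position `d₂` of `b` gives the same word, `a` and `b` agree outside `[d₁, d₂]` and `a` is `b`
shifted by one place inside. So for any weights `c`, the difference `Σ c_p x_p - Σ c_p x'_p`
is a combination of the two substitution terms and of the bits `b_q`, `q ∈ [d₁, d₂)`.
The weight congruence mod 4 forces `a_{d₁} = b_{d₂}` and `x_{e₁} = x'_{e₂}`; after that, the
differences of the first and second syndromes are smaller in absolute value than `2n` and
`2n²`, hence vanish. With `Q` the set of `q ∈ [d₁, d₂)` where `b_q ≠ b_{d₂}` this gives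
`|Q| = ±(e₁ - e₂)` and `Σ_{q ∈ Q} (q + 1) = ±(T e₁ - T e₂)`, `T` the triangular numbers:
`|Q|` distinct elements of `[d₁, d₂)` have the same sum as `|Q|` consecutive integers starting
at `min e₁ e₂`, which is only possible if both `e₁` and `e₂` lie in `[d₁, d₂]`. If `Q` is
empty, then `e₁ = e₂` and `a = b`, so `x = x'`.
-/

open Finset

lemma sum_range_add_le_sum (S : Finset ℕ) {a : ℕ} (ha : ∀ s ∈ S, a ≤ s) :
    ∑ i ∈ range #S, (a + i) ≤ ∑ s ∈ S, s := by
  induction S using Finset.induction_on_max with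
  | empty => simp
  | insert m S hlt ih =>
    have hm : m ∉ S := fun h => lt_irrefl m (hlt m h)
    have hcard : #S ≤ m - a := by
      calc #S ≤ #(Ico a m) :=
            card_le_card fun s hs => mem_Ico.mpr ⟨ha s (mem_insert_of_mem hs), hlt s hs⟩
        _ = m - a := Nat.card_Ico a m
    have ham := ha m (mem_insert_self m S)
    have hS := ih fun s hs => ha s (mem_insert_of_mem hs)
    rw [card_insert_of_notMem hm, sum_range_succ, sum_insert hm]
    omega

lemma sum_le_sum_range_add (S : Finset ℕ) {b : ℕ} (hb : ∀ s ∈ S, s < b) :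
    ∑ s ∈ S, s ≤ ∑ i ∈ range #S, (b - #S + i) := by
  induction S using Finset.induction_on_max generalizing b with
  | empty => simp
  | insert m S hlt ih =>
    have hm : m ∉ S := fun h => lt_irrefl m (hlt m h)
    have hcard : #S ≤ m := by simpa using card_le_card fun s hs => mem_range.mpr (hlt s hs)
    have hmb := hb m (mem_insert_self m S)
    have hS : ∑ s ∈ S, s ≤ ∑ i ∈ range #S, (b - (#S + 1) + i) :=
      (ih hlt).trans (sum_le_sum fun i _ => by omega)
    rw [card_insert_of_notMem hm, sum_range_succ, sum_insert hm]
    omega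

lemma le_and_add_card_le_of_sum_eq {S : Finset ℕ} {a b m : ℕ} (hS : S ⊆ Ico a b)
    (hne : S.Nonempty) (hsum : ∑ s ∈ S, s = ∑ i ∈ range #S, (m + i)) : a ≤ m ∧ m + #S ≤ b := by
  have hcard : #S ≤ b - a := by simpa using card_le_card hS
  have hrange : (range #S).Nonempty := nonempty_range_iff.mpr (card_pos.mpr hne).ne'
  have hlo := sum_range_add_le_sum S fun s hs => (mem_Ico.mp (hS hs)).1
  have hhi := sum_le_sum_range_add S fun s hs => (mem_Ico.mp (hS hs)).2
  constructor
  · by_contra! h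
    have := sum_lt_sum_of_nonempty hrange fun i (_ : i ∈ range #S) => (by omega : m + i < a + i)
    omega
  · by_contra! h
    have := sum_lt_sum_of_nonempty hrange fun i (_ : i ∈ range #S) =>
      (by omega : b - #S + i < m + i)
    omega

section IntervalSums

variable {n d1 d2 : ℕ}

lemma sum_Icc_eq_sum_Ico_add_sum_Ioc (f : ℕ → ℤ) (hd1 : 1 ≤ d1) (hle : d1 ≤ d2)
    (hd2 : d2 ≤ n) :
    ∑ p ∈ Icc 1 n, f p
      = ∑ p ∈ Ico 1 d1, f p + ∑ p ∈ Ico d1 (d2 + 1), f p + ∑ p ∈ Ioc d2 n, f p := by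
  rw [← Ico_add_one_right_eq_Icc, ← Ico_add_one_add_one_eq_Ioc,
    sum_Ico_consecutive _ hd1 (by omega), sum_Ico_consecutive _ (by omega) (by omega)]

lemma sum_mul_sub_sum_mul_of_shift (c A B : ℕ → ℤ) (hd1 : 1 ≤ d1) (hle : d1 ≤ d2)
    (hd2 : d2 ≤ n) (hlow : ∀ p ∈ Ico 1 d1, A p = B p) (hmid : ∀ q ∈ Ico d1 d2, A (q + 1) = B q)
    (hhigh : ∀ p ∈ Ioc d2 n, A p = B p) :
    ∑ p ∈ Icc 1 n, c p * A p - ∑ p ∈ Icc 1 n, c p * B p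
      = c d1 * A d1 - c d2 * B d2 + ∑ q ∈ Ico d1 d2, (c (q + 1) - c q) * B q := by
  have hA : ∑ p ∈ Ico d1 (d2 + 1), c p * A p
      = c d1 * A d1 + ∑ q ∈ Ico d1 d2, c (q + 1) * B q := by
    rw [sum_eq_sum_Ico_succ_bot (by omega), ← sum_Ico_add']
    exact congrArg _ (sum_congr rfl fun q hq => by rw [hmid q hq])
  have hB : ∑ p ∈ Ico d1 (d2 + 1), c p * B p = ∑ q ∈ Ico d1 d2, c q * B q + c d2 * B d2 :=
    sum_Ico_succ_top hle _
  have hlow' : ∑ p ∈ Ico 1 d1, c p * A p = ∑ p ∈ Ico 1 d1, c p * B p :=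
    sum_congr rfl fun p hp => by rw [hlow p hp]
  have hhigh' : ∑ p ∈ Ioc d2 n, c p * A p = ∑ p ∈ Ioc d2 n, c p * B p :=
    sum_congr rfl fun p hp => by rw [hhigh p hp]
  rw [sum_Icc_eq_sum_Ico_add_sum_Ioc _ hd1 hle hd2, sum_Icc_eq_sum_Ico_add_sum_Ioc _ hd1 hle hd2,
    hA, hB, hlow', hhigh']
  simp only [sub_mul, sum_sub_distrib]
  ring

end IntervalSums

def bitZ {n : ℕ} (z : Fin n → Fin 2) (p : ℕ) : ℤ := ((getBit z p : ℕ) : ℤ)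

def weightedSum {n : ℕ} (c : ℕ → ℤ) (z : Fin n → Fin 2) : ℤ :=
  ∑ p ∈ Icc 1 n, c p * bitZ z p

def vtCoeff (j p : ℕ) : ℤ := ∑ l ∈ Icc 1 p, (l : ℤ) ^ (j - 1)

section Bits

variable {n : ℕ}

lemma bitZ_eq_zero_or_one (z : Fin n → Fin 2) (p : ℕ) : bitZ z p = 0 ∨ bitZ z p = 1 := by
  unfold bitZ
  have := (getBit z p).isLt
  omega

lemma getBit_eq_of_bitZ_eq {z z' : Fin n → Fin 2} {p p' : ℕ} (h : bitZ z p = bitZ z' p') :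
    getBit z p = getBit z' p' :=
  Fin.ext (by unfold bitZ at h; exact_mod_cast h)

lemma getBit_succ (z : Fin n → Fin 2) (i : Fin n) : getBit z (i + 1) = z i := by
  simp [getBit]

lemma ext_of_getBit {z z' : Fin n → Fin 2} (h : ∀ p ∈ Icc 1 n, getBit z p = getBit z' p) :
    z = z' := by
  funext i
  rw [← getBit_succ z i, ← getBit_succ z' i]
  exact h _ (mem_Icc.mpr ⟨by omega, i.isLt⟩)

lemma getBit_substAt (x : Fin n → Fin 2) (e : ℕ) {p : ℕ} (hp : p ∈ Icc 1 n) :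
    getBit (substAt x e) p = if p = e then 1 - getBit x p else getBit x p := by
  rw [mem_Icc] at hp
  simp only [getBit, dif_pos (show p - 1 < n by omega), substAt, Nat.sub_add_cancel hp.1]

lemma substAt_substAt (x : Fin n → Fin 2) (e : ℕ) : substAt (substAt x e) e = x := by
  funext i
  unfold substAt
  split_ifs
  · exact sub_sub_cancel 1 (x i)
  · rfl

lemma bitZ_substAt (x : Fin n → Fin 2) (e : ℕ) {p : ℕ} (hp : p ∈ Icc 1 n) :
    bitZ (substAt x e) p = if p = e then 1 - bitZ x p else bitZ x p := by
  unfold bitZ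
  rw [getBit_substAt x e hp]
  split_ifs
  · generalize getBit x p = v
    fin_cases v <;> rfl
  · rfl

lemma sum_Icc_one_eq_sum_fin {M : Type*} [AddCommMonoid M] (f : ℕ → M) :
    ∑ p ∈ Icc 1 n, f p = ∑ i : Fin n, f (i + 1) := by
  rw [Fin.sum_univ_eq_sum_range (fun i => f (i + 1)), range_eq_Ico, sum_Ico_add',
    Ico_add_one_right_eq_Icc, zero_add]

lemma wt_eq_weightedSum (z : Fin n → Fin 2) : (wt z : ℤ) = weightedSum (fun _ => 1) z := by
  simp [wt, weightedSum, sum_Icc_one_eq_sum_fin, bitZ, getBit_succ]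

lemma vtSyn_eq_weightedSum (j : ℕ) (z : Fin n → Fin 2) :
    (vtSyn j z : ℤ) = weightedSum (vtCoeff j) z := by
  simp [vtSyn, weightedSum, vtCoeff, sum_Icc_one_eq_sum_fin, bitZ, getBit_succ]

lemma weightedSum_substAt (c : ℕ → ℤ) (x : Fin n → Fin 2) {e : ℕ} (he : e ∈ Icc 1 n) :
    weightedSum c (substAt x e) = weightedSum c x + c e * (1 - 2 * bitZ x e) := by
  have hterm : ∀ p ∈ Icc 1 n, c p * bitZ (substAt x e) p
      = c p * bitZ x p + if p = e then c e * (1 - 2 * bitZ x e) else 0 := by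
    intro p hp
    rw [bitZ_substAt x e hp]
    split_ifs with h
    · subst h; ring
    · ring
  rw [weightedSum, sum_congr rfl hterm, sum_add_distrib, sum_ite_eq', if_pos he, weightedSum]

end Bits

lemma vtCoeff_succ (j p : ℕ) : vtCoeff j (p + 1) = vtCoeff j p + ((p : ℤ) + 1) ^ (j - 1) := by
  rw [vtCoeff, sum_Icc_succ_top (by omega), vtCoeff]
  push_cast
  rfl

lemma vtCoeff_mono (j : ℕ) : Monotone (vtCoeff j) :=
  monotone_nat_of_le_succ fun p => by
    rw [vtCoeff_succ]
    linarith [pow_nonneg (by positivity : (0 : ℤ) ≤ p + 1) (j - 1)]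

@[simp]
lemma vtCoeff_one_right (j : ℕ) : vtCoeff j 1 = 1 := by
  simp [vtCoeff]

@[simp]
lemma vtCoeff_one_left (p : ℕ) : vtCoeff 1 p = p := by
  simp [vtCoeff]

lemma two_mul_vtCoeff_two (p : ℕ) : 2 * vtCoeff 2 p = p * (p + 1) := by
  induction p with
  | zero => simp [vtCoeff]
  | succ p ih => rw [vtCoeff_succ, mul_add, ih]; push_cast; ring

lemma vtCoeff_two_add_sub (m k : ℕ) :
    vtCoeff 2 (m + k) - vtCoeff 2 m = ∑ i ∈ range k, (((m + i : ℕ) : ℤ) + 1) := by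
  induction k with
  | zero => simp
  | succ k ih => rw [← add_assoc, vtCoeff_succ, sum_range_succ, ← ih]; ring

lemma le_and_le_of_card_eq_sub {Q : Finset ℕ} {d1 d2 eL eH : ℕ} (hQ : Q ⊆ Ico d1 d2)
    (hne : Q.Nonempty) (hcard : (#Q : ℤ) = eH - eL)
    (hsum : ∑ q ∈ Q, ((q : ℤ) + 1) = vtCoeff 2 eH - vtCoeff 2 eL) : d1 ≤ eL ∧ eH ≤ d2 := by
  obtain rfl : eH = eL + #Q := by omega
  rw [vtCoeff_two_add_sub, sum_add_distrib, sum_add_distrib] at hsum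
  simp only [sum_const, card_range, nsmul_one, add_left_inj] at hsum
  refine le_and_add_card_le_of_sum_eq hQ hne (Nat.cast_injective (R := ℤ) ?_)
  push_cast
  exact hsum

lemma le_and_le_of_card_eq_signed {Q : Finset ℕ} {d1 d2 e1 e2 : ℕ} (hQ : Q ⊆ Ico d1 d2)
    (hne : Q.Nonempty) {ε : ℤ} (hε : ε = 1 ∨ ε = -1) (hcard : (#Q : ℤ) = ε * (e1 - e2))
    (hsum : ∑ q ∈ Q, ((q : ℤ) + 1) = ε * (vtCoeff 2 e1 - vtCoeff 2 e2)) :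
    (d1 ≤ e1 ∧ e1 ≤ d2) ∧ (d1 ≤ e2 ∧ e2 ≤ d2) := by
  rcases hε with rfl | rfl
  · have := le_and_le_of_card_eq_sub hQ hne (eL := e2) (eH := e1) (by linarith) (by linarith)
    omega
  · have := le_and_le_of_card_eq_sub hQ hne (eL := e1) (eH := e2) (by linarith) (by linarith)
    omega

section Deletion

variable {n d1 d2 : ℕ}

lemma getBit_of_delAt_eq {a b : Fin n → Fin 2} (h : delAt a d1 = delAt b d2)
    (hd1 : 1 ≤ d1) (hle : d1 ≤ d2) (hd2 : d2 ≤ n) :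
    (∀ p ∈ Ico 1 d1, getBit a p = getBit b p) ∧
    (∀ q ∈ Ico d1 d2, getBit a (q + 1) = getBit b q) ∧
    (∀ p ∈ Ioc d2 n, getBit a p = getBit b p) := by
  have hi (i : ℕ) (hin : i + 1 < n) := congrFun h ⟨i, by omega⟩
  simp only [delAt] at hi
  refine ⟨fun p hp => ?_, fun q hq => ?_, fun p hp => ?_⟩
  · obtain ⟨i, rfl⟩ : ∃ i, p = i + 1 := ⟨p - 1, by rw [mem_Ico] at hp; omega⟩
    rw [mem_Ico] at hp
    simpa [if_pos (by omega : i + 1 < d1), if_pos (by omega : i + 1 < d2)]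
      using hi i (by omega)
  · obtain ⟨i, rfl⟩ : ∃ i, q = i + 1 := ⟨q - 1, by rw [mem_Ico] at hq; omega⟩
    rw [mem_Ico] at hq
    simpa [if_neg (by omega : ¬ i + 1 < d1), if_pos (by omega : i + 1 < d2)]
      using hi i (by omega)
  · obtain ⟨i, rfl⟩ : ∃ i, p = i + 2 := ⟨p - 2, by rw [mem_Ioc] at hp; omega⟩
    rw [mem_Ioc] at hp
    simpa [if_neg (by omega : ¬ i + 1 < d1), if_neg (by omega : ¬ i + 1 < d2)]
      using hi i (by omega)

lemma weightedSum_sub_of_delAt_eq (c : ℕ → ℤ) {a b : Fin n → Fin 2}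
    (h : delAt a d1 = delAt b d2) (hd1 : 1 ≤ d1) (hle : d1 ≤ d2) (hd2 : d2 ≤ n) :
    weightedSum c a - weightedSum c b
      = c d1 * bitZ a d1 - c d2 * bitZ b d2
        + ∑ q ∈ Ico d1 d2, (c (q + 1) - c q) * bitZ b q := by
  obtain ⟨hlow, hmid, hhigh⟩ := getBit_of_delAt_eq h hd1 hle hd2
  exact sum_mul_sub_sum_mul_of_shift c _ _ hd1 hle hd2 (fun p hp => by simp [bitZ, hlow p hp])
    (fun q hq => by simp [bitZ, hmid q hq]) (fun p hp => by simp [bitZ, hhigh p hp])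

lemma eq_of_delAt_eq_of_forall_getBit_eq {a b : Fin n → Fin 2} (h : delAt a d1 = delAt b d2)
    (hd1 : 1 ≤ d1) (hle : d1 ≤ d2) (hd2 : d2 ≤ n) (hend : getBit a d1 = getBit b d2)
    (hconst : ∀ q ∈ Ico d1 d2, getBit b q = getBit b d2) : a = b := by
  obtain ⟨hlow, hmid, hhigh⟩ := getBit_of_delAt_eq h hd1 hle hd2
  refine ext_of_getBit fun p hp => ?_
  rw [mem_Icc] at hp
  rcases lt_or_ge p d1 with hp1 | hp1
  · exact hlow p (mem_Ico.mpr ⟨hp.1, hp1⟩)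
  rcases lt_or_ge d2 p with hp2 | hp2
  · exact hhigh p (mem_Ioc.mpr ⟨hp2, hp.2⟩)
  have ha : getBit a p = getBit b d2 := by
    rcases hp1.eq_or_lt with rfl | hp1
    · exact hend
    · obtain ⟨q, rfl⟩ : ∃ q, p = q + 1 := ⟨p - 1, by omega⟩
      have hq : q ∈ Ico d1 d2 := mem_Ico.mpr ⟨by omega, by omega⟩
      rw [hmid q hq, hconst q hq]
  have hb : getBit b p = getBit b d2 := by
    rcases hp2.eq_or_lt with rfl | hp2
    · rfl
    · exact hconst p (mem_Ico.mpr ⟨hp1, hp2⟩)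
  rw [ha, hb]

end Deletion

def diffPositions {n : ℕ} (b : Fin n → Fin 2) (d1 d2 : ℕ) : Finset ℕ :=
  (Ico d1 d2).filter fun q => getBit b q ≠ getBit b d2

lemma diffPositions_subset {n : ℕ} (b : Fin n → Fin 2) (d1 d2 : ℕ) :
    diffPositions b d1 d2 ⊆ Ico d1 d2 :=
  filter_subset _ _

lemma sum_mul_bitZ_sub_eq {n : ℕ} (f : ℕ → ℤ) (b : Fin n → Fin 2) (d1 d2 : ℕ) :
    ∑ q ∈ Ico d1 d2, f q * (bitZ b q - bitZ b d2)
      = (1 - 2 * bitZ b d2) * ∑ q ∈ diffPositions b d1 d2, f q := by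
  rw [diffPositions, sum_filter, mul_sum]
  refine sum_congr rfl fun q _ => ?_
  unfold bitZ
  generalize getBit b q = u
  generalize getBit b d2 = v
  fin_cases u <;> fin_cases v <;> simp

section Confusion

variable {n : ℕ} {x x' : Fin n → Fin 2} {d1 e1 d2 e2 : ℕ}

lemma weightedSum_sub_of_delSub_eq (c : ℕ → ℤ) (hE : delSub x d1 e1 = delSub x' d2 e2)
    (hd1 : 1 ≤ d1) (hle : d1 ≤ d2) (hd2 : d2 ≤ n) (he1 : e1 ∈ Icc 1 n) (he2 : e2 ∈ Icc 1 n) :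
    weightedSum c x - weightedSum c x'
      = c d1 * bitZ (substAt x e1) d1 - c d2 * bitZ (substAt x' e2) d2
        + ∑ q ∈ Ico d1 d2, (c (q + 1) - c q) * bitZ (substAt x' e2) q
        + c e2 * (1 - 2 * bitZ x' e2) - c e1 * (1 - 2 * bitZ x e1) := by
  have h := weightedSum_sub_of_delAt_eq c hE hd1 hle hd2
  rw [weightedSum_substAt c x he1, weightedSum_substAt c x' he2] at h
  linarith

lemma bitZ_eq_of_delSub_eq (hE : delSub x d1 e1 = delSub x' d2 e2)
    (hd1 : 1 ≤ d1) (hle : d1 ≤ d2) (hd2 : d2 ≤ n) (he1 : e1 ∈ Icc 1 n) (he2 : e2 ∈ Icc 1 n)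
    (hwt : wt x ≡ wt x' [MOD 4]) :
    bitZ (substAt x e1) d1 = bitZ (substAt x' e2) d2 ∧ bitZ x e1 = bitZ x' e2 := by
  have h := weightedSum_sub_of_delSub_eq (fun _ => 1) hE hd1 hle hd2 he1 he2
  simp only [sub_self, zero_mul, sum_const_zero, add_zero, one_mul, ← wt_eq_weightedSum] at h
  have hdvd : (4 : ℤ) ∣ wt x' - wt x := Nat.ModEq.dvd hwt
  have := bitZ_eq_zero_or_one (substAt x e1) d1
  have := bitZ_eq_zero_or_one (substAt x' e2) d2
  have := bitZ_eq_zero_or_one x e1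
  have := bitZ_eq_zero_or_one x' e2
  omega

lemma sum_diffPositions_eq (c : ℕ → ℤ) (hc : Monotone c) {M : ℤ} (hM : 2 * (c n - c 1) < M)
    (hdvd : M ∣ weightedSum c x - weightedSum c x') (hE : delSub x d1 e1 = delSub x' d2 e2)
    (hd1 : 1 ≤ d1) (hle : d1 ≤ d2) (hd2 : d2 ≤ n) (he1 : e1 ∈ Icc 1 n) (he2 : e2 ∈ Icc 1 n)
    (ht : bitZ (substAt x e1) d1 = bitZ (substAt x' e2) d2) (hs : bitZ x e1 = bitZ x' e2) :
    ∑ q ∈ diffPositions (substAt x' e2) d1 d2, (c (q + 1) - c q)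
      = (1 - 2 * bitZ (substAt x' e2) d2) * (1 - 2 * bitZ x e1) * (c e1 - c e2) := by
  set b := substAt x' e2
  set S := ∑ q ∈ diffPositions b d1 d2, (c (q + 1) - c q)
  have hsplit : ∑ q ∈ Ico d1 d2, (c (q + 1) - c q) * bitZ b q
      = bitZ b d2 * (c d2 - c d1) + (1 - 2 * bitZ b d2) * S := by
    rw [← sum_mul_bitZ_sub_eq, ← sum_Ico_sub c hle, mul_sum, ← sum_add_distrib]
    exact sum_congr rfl fun q _ => by ring
  have hdiff : weightedSum c x - weightedSum c x'
      = (1 - 2 * bitZ b d2) * S - (1 - 2 * bitZ x e1) * (c e1 - c e2) := by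
    rw [weightedSum_sub_of_delSub_eq c hE hd1 hle hd2 he1 he2, hsplit, ht, ← hs]
    ring
  have hstep : ∀ q, 0 ≤ c (q + 1) - c q := fun q => sub_nonneg.mpr (hc q.le_succ)
  have hS : 0 ≤ S ∧ S ≤ c n - c 1 := by
    refine ⟨sum_nonneg fun q _ => hstep q, ?_⟩
    calc S ≤ ∑ q ∈ Ico d1 d2, (c (q + 1) - c q) :=
          sum_le_sum_of_subset_of_nonneg (diffPositions_subset b d1 d2) fun q _ _ => hstep q
      _ = c d2 - c d1 := sum_Ico_sub c hle
      _ ≤ c n - c 1 := sub_le_sub (hc hd2) (hc hd1)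
  have he : |c e1 - c e2| ≤ c n - c 1 := by
    rw [mem_Icc] at he1 he2
    rw [abs_sub_le_iff]
    constructor <;> linarith [hc he1.1, hc he1.2, hc he2.1, hc he2.2]
  have hzero : (1 - 2 * bitZ b d2) * S - (1 - 2 * bitZ x e1) * (c e1 - c e2) = 0 := by
    refine Int.eq_zero_of_abs_lt_dvd (hdiff ▸ hdvd) ?_
    rw [abs_lt]
    rcases bitZ_eq_zero_or_one b d2 with ht | ht <;>
    rcases bitZ_eq_zero_or_one x e1 with hs | hs <;>
    rw [ht, hs] <;> constructor <;> linarith [abs_le.mp he]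
  rcases bitZ_eq_zero_or_one b d2 with ht | ht <;> rw [ht] at hzero ⊢ <;> linarith

lemma diffPositions_card_and_sum_eq_sign_mul (hE : delSub x d1 e1 = delSub x' d2 e2)
    (hd1 : 1 ≤ d1) (hle : d1 ≤ d2) (hd2 : d2 ≤ n) (he1 : e1 ∈ Icc 1 n) (he2 : e2 ∈ Icc 1 n)
    (ht : bitZ (substAt x e1) d1 = bitZ (substAt x' e2) d2) (hs : bitZ x e1 = bitZ x' e2)
    (hf1 : vtSyn 1 x ≡ vtSyn 1 x' [MOD 2 * n]) (hf2 : vtSyn 2 x ≡ vtSyn 2 x' [MOD 2 * n ^ 2]) :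
    ∃ ε : ℤ, (ε = 1 ∨ ε = -1) ∧
      (#(diffPositions (substAt x' e2) d1 d2) : ℤ) = ε * (e1 - e2) ∧
      ∑ q ∈ diffPositions (substAt x' e2) d1 d2, ((q : ℤ) + 1)
        = ε * (vtCoeff 2 e1 - vtCoeff 2 e2) := by
  refine ⟨(1 - 2 * bitZ (substAt x' e2) d2) * (1 - 2 * bitZ x e1), ?_, ?_, ?_⟩
  · rcases bitZ_eq_zero_or_one (substAt x' e2) d2 with h | h <;>
    rcases bitZ_eq_zero_or_one x e1 with h' | h' <;> simp [h, h']
  · have hdvd := Nat.ModEq.dvd hf1.symm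
    rw [vtSyn_eq_weightedSum, vtSyn_eq_weightedSum] at hdvd
    have h := sum_diffPositions_eq (vtCoeff 1) (vtCoeff_mono 1) (M := ((2 * n : ℕ) : ℤ))
      (by simp) hdvd hE hd1 hle hd2 he1 he2 ht hs
    simpa using h
  · have hdvd := Nat.ModEq.dvd hf2.symm
    rw [vtSyn_eq_weightedSum, vtSyn_eq_weightedSum] at hdvd
    have hM : 2 * (vtCoeff 2 n - vtCoeff 2 1) < ((2 * n ^ 2 : ℕ) : ℤ) := by
      rw [mul_sub, two_mul_vtCoeff_two, vtCoeff_one_right]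
      push_cast
      nlinarith [sq_nonneg ((n : ℤ) - 1)]
    have h := sum_diffPositions_eq (vtCoeff 2) (vtCoeff_mono 2) hM hdvd hE hd1 hle hd2 he1 he2
      ht hs
    simpa [vtCoeff_succ] using h

lemma eq_of_diffPositions_eq_empty (hE : delSub x d1 e1 = delSub x' d2 e2)
    (hd1 : 1 ≤ d1) (hle : d1 ≤ d2) (hd2 : d2 ≤ n)
    (ht : bitZ (substAt x e1) d1 = bitZ (substAt x' e2) d2)
    (hQ : diffPositions (substAt x' e2) d1 d2 = ∅) (he : e1 = e2) : x = x' := by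
  subst he
  have hconst : ∀ q ∈ Ico d1 d2, getBit (substAt x' e1) q = getBit (substAt x' e1) d2 := by
    simpa [diffPositions, filter_eq_empty_iff] using hQ
  have h := eq_of_delAt_eq_of_forall_getBit_eq hE hd1 hle hd2 (getBit_eq_of_bitZ_eq ht) hconst
  rw [← substAt_substAt x e1, h, substAt_substAt]

end Confusion

theorem stmt3_general (n : ℕ) (c0 c1 c2 : ℕ)
    (x x' : Fin n → Fin 2)
    (hx : x ∈ codeC n c0 c1 c2) (hx' : x' ∈ codeC n c0 c1 c2) (hne : x ≠ x')
    (d1 e1 d2 e2 : ℕ)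
    (hd1 : d1 ∈ Finset.Icc 1 n) (he1 : e1 ∈ Finset.Icc 1 n)
    (hd2 : d2 ∈ Finset.Icc 1 n) (he2 : e2 ∈ Finset.Icc 1 n)
    (h1 : d1 ≠ e1) (h2 : d2 ≠ e2) (hle : d1 ≤ d2)
    (hE : delSub x d1 e1 = delSub x' d2 e2) :
    (d1 < e1 ∧ e1 ≤ d2) ∧ (d1 ≤ e2 ∧ e2 < d2) := by
  simp only [codeC, mem_filter, mem_univ, true_and] at hx hx'
  obtain ⟨-, -, hw, hf1, hf2⟩ := hx
  obtain ⟨-, -, hw', hf1', hf2'⟩ := hx'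
  rw [mem_Icc] at hd1 hd2
  obtain ⟨ht, hs⟩ := bitZ_eq_of_delSub_eq hE hd1.1 hle hd2.2 he1 he2 (hw.trans hw'.symm)
  obtain ⟨ε, hε, hcard, hsum⟩ := diffPositions_card_and_sum_eq_sign_mul hE hd1.1 hle hd2.2
    he1 he2 ht hs (hf1.trans hf1'.symm) (hf2.trans hf2'.symm)
  rcases (diffPositions (substAt x' e2) d1 d2).eq_empty_or_nonempty with hQ | hQ
  · have he : e1 = e2 := by
      rw [hQ, card_empty, Nat.cast_zero] at hcard
      rcases hε with rfl | rfl <;> omega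
    exact absurd (eq_of_diffPositions_eq_empty hE hd1.1 hle hd2.2 ht hQ he) hne
  · have := le_and_le_of_card_eq_signed (diffPositions_subset _ d1 d2) hQ hε hcard hsum
    omega

/-- Lemma 2: if two distinct codewords yield the same corrupted
sequence, the substituted positions lie between the deleted positions. -/
theorem stmt3 (n : ℕ) (hn : 2 ≤ n) (c0 c1 c2 : ℕ)
    (hc0 : c0 < 4) (hc1 : c1 < 2 * n) (hc2 : c2 < 2 * n ^ 2)
    (x x' : Fin n → Fin 2)
    (hx : x ∈ codeC n c0 c1 c2) (hx' : x' ∈ codeC n c0 c1 c2) (hne : x ≠ x')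
    (d1 e1 d2 e2 : ℕ)
    (hd1 : d1 ∈ Finset.Icc 1 n) (he1 : e1 ∈ Finset.Icc 1 n)
    (hd2 : d2 ∈ Finset.Icc 1 n) (he2 : e2 ∈ Finset.Icc 1 n)
    (h1 : d1 ≠ e1) (h2 : d2 ≠ e2) (hle : d1 ≤ d2)
    (hE : delSub x d1 e1 = delSub x' d2 e2) :
    (d1 < e1 ∧ e1 ≤ d2) ∧ (d1 ≤ e2 ∧ e2 < d2) :=
  stmt3_general n c0 c1 c2 x x' hx hx' hne d1 e1 d2 e2 hd1 he1 hd2 he2 h1 h2 hle hE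
end

section
/- Let n ≥ 2, (c_0, c_1, c_2) ∈ Z_4 × Z_{2n} × Z_{2n²}, and suppose x, x' ∈ C_n(c_0,c_1,c_2) and d_1, e_1, d_2, e_2 ∈ {1,…,n} with d_1 ≠ e_1, d_2 ≠ e_2, and E(x, d_1, e_1) = E(x', d_2, e_2). If either e_1 < d_1 ≤ d_2 < e_2 or e_2 < d_1 ≤ d_2 < e_1 (Case (iii)), then x = x'. -/
/-!
Reading `E(x, d1, e1) = E(x', d2, e2)` position by position, with `eL < d1 ≤ d2 < eH` the two
substituted positions, `x'` agrees with `x` outside `{eL, eH} ∪ [d1, d2]`, is `x` shifted left by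
one on `[d1, d2)`, and differs from `x` at `eL` and at `eH`. The weight congruence mod 4 then forces
the two substitutions to go in opposite directions and `x_{d1} = x'_{d2}`; summing by parts, the
difference of the first-order VT syndromes becomes `±(eH - eL)` corrected by at most `d2 - d1`,
a nonzero integer of absolute value below `2n`. So Case (iii) cannot occur at all.
-/

open Finset

namespace VTCode

lemma ite_sub_eq_ite_sub_iff (a b : Fin 2) (P Q : Prop) [Decidable P] [Decidable Q] :
    ((if P then 1 - a else a) = if Q then 1 - b else b) ↔ (a = b ↔ (P ↔ Q)) := by
  by_cases hP : P <;> by_cases hQ : Q <;> simp only [hP, hQ, if_true, if_false] <;>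
    revert a b <;> decide

lemma natCast_val_eq_zero_or_one (a : Fin 2) : ((a : ℕ) : ℤ) = 0 ∨ ((a : ℕ) : ℤ) = 1 := by
  revert a; decide

lemma natCast_val_sub_eq_one_or_neg_one {a b : Fin 2} (h : a ≠ b) :
    ((a : ℕ) : ℤ) - (b : ℕ) = 1 ∨ ((a : ℕ) : ℤ) - (b : ℕ) = -1 := by
  revert a b; decide

lemma getBit_substAt {n : ℕ} (x : Fin n → Fin 2) (e : ℕ) {p : ℕ} (hp : 1 ≤ p) (hpn : p ≤ n) :
    getBit (substAt x e) p = if p = e then 1 - getBit x p else getBit x p := by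
  have h : p - 1 < n := by omega
  simp only [getBit, substAt, dif_pos h, Nat.sub_add_cancel hp]

lemma getBit_delAt {n : ℕ} (x : Fin n → Fin 2) (d : ℕ) {q : ℕ} (hq : 1 ≤ q) (hqn : q < n) :
    getBit (delAt x d) q = getBit x (if q < d then q else q + 1) := by
  have h : q - 1 < n - 1 := by omega
  simp only [getBit, delAt, dif_pos h, Nat.sub_add_cancel hq, show q - 1 + 2 = q + 1 by omega]
  split_ifs <;> rfl

/-- Position `q` of the common word is read from `x` at `s1` and from `x'` at `s2`. -/
lemma getBit_eq_iff_of_delSub_eq {n : ℕ} {x x' : Fin n → Fin 2} {d1 e1 d2 e2 : ℕ}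
    (hE : delSub x d1 e1 = delSub x' d2 e2) (q s1 s2 : ℕ) (hq : 1 ≤ q) (hqn : q < n)
    (hs1 : q < d1 ∧ s1 = q ∨ d1 ≤ q ∧ s1 = q + 1) (hs2 : q < d2 ∧ s2 = q ∨ d2 ≤ q ∧ s2 = q + 1) :
    getBit x s1 = getBit x' s2 ↔ (s1 = e1 ↔ s2 = e2) := by
  have h := congrArg (getBit · q) hE
  simp only [delSub, getBit_delAt _ _ hq hqn] at h
  rwa [show (if q < d1 then q else q + 1) = s1 by split_ifs <;> omega,
    show (if q < d2 then q else q + 1) = s2 by split_ifs <;> omega,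
    getBit_substAt x e1 (by omega) (by omega), getBit_substAt x' e2 (by omega) (by omega),
    ite_sub_eq_ite_sub_iff] at h

lemma getBit_relations_of_delSub_eq {n : ℕ} {x x' : Fin n → Fin 2} {d1 e1 d2 e2 eL eH : ℕ}
    (hE : delSub x d1 e1 = delSub x' d2 e2)
    (he : (eL = e1 ∧ eH = e2) ∨ (eL = e2 ∧ eH = e1))
    (hL : 1 ≤ eL) (hLd : eL < d1) (hdd : d1 ≤ d2) (hdH : d2 < eH) (hHn : eH ≤ n) :
    (∀ q, 1 ≤ q → q < d1 → q ≠ eL → getBit x q = getBit x' q) ∧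
    getBit x eL ≠ getBit x' eL ∧
    (∀ q, d1 ≤ q → q < d2 → getBit x (q + 1) = getBit x' q) ∧
    (∀ q, d2 < q → q ≤ n → q ≠ eH → getBit x q = getBit x' q) ∧
    getBit x eH ≠ getBit x' eH := by
  have rel := getBit_eq_iff_of_delSub_eq hE
  refine ⟨fun q hq hqd hqL => ?_, fun h => ?_, fun q hdq hqd => ?_,
    fun q hdq hqn hqH => ?_, fun h => ?_⟩
  · exact (rel q q q hq (by omega) (by omega) (by omega)).2 (by omega)
  · have := (rel eL eL eL hL (by omega) (by omega) (by omega)).1 h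
    omega
  · exact (rel q (q + 1) q (by omega) (by omega) (by omega) (by omega)).2 (by omega)
  · exact (rel (q - 1) q q (by omega) (by omega) (by omega) (by omega)).2 (by omega)
  · have := (rel (eH - 1) eH eH (by omega) (by omega) (by omega) (by omega)).1 h
    omega

lemma sum_Icc_mul_getBit {n : ℕ} (x : Fin n → Fin 2) (w : ℕ → ℤ) :
    ∑ p ∈ Icc 1 n, w p * (getBit x p : ℕ) = ∑ i : Fin n, w (i + 1) * (x i : ℕ) := by
  rw [← Ico_add_one_right_eq_Icc, sum_Ico_eq_sum_range, Nat.add_sub_cancel,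
    ← Fin.sum_univ_eq_sum_range]
  refine sum_congr rfl fun i _ => ?_
  simp [getBit, add_comm 1]

lemma natCast_wt {n : ℕ} (x : Fin n → Fin 2) :
    (wt x : ℤ) = ∑ p ∈ Icc 1 n, ((getBit x p : ℕ) : ℤ) := by
  simpa [wt] using (sum_Icc_mul_getBit x 1).symm

lemma natCast_vtSyn_one {n : ℕ} (x : Fin n → Fin 2) :
    (vtSyn 1 x : ℤ) = ∑ p ∈ Icc 1 n, (p : ℤ) * (getBit x p : ℕ) := by
  rw [sum_Icc_mul_getBit x (↑), vtSyn]
  simp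

section Summation

variable {R : Type*} [CommRing R]

lemma sum_Icc_mul_sub_of_shift (f g w : ℕ → R) {d1 d2 : ℕ} (hdd : d1 ≤ d2)
    (hshift : ∀ q, d1 ≤ q → q < d2 → f (q + 1) = g q) :
    ∑ p ∈ Icc d1 d2, w p * (f p - g p) =
      w d1 * f d1 + ∑ p ∈ Ioc d1 d2, (w p - w (p - 1)) * f p - w d2 * g d2 := by
  induction d2, hdd using Nat.le_induction with
  | base => simp; ring
  | succ d2 hdd ih =>
    rw [sum_Icc_succ_top (by omega), sum_Ioc_succ_top hdd,
      ih fun q hq hqd => hshift q hq (by omega), ← hshift d2 hdd (by omega), Nat.add_sub_cancel]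
    ring

lemma sum_Icc_mul_sub_of_agree_outside (f g w : ℕ → R) {n eL d1 d2 eH : ℕ}
    (hL : 1 ≤ eL) (hLd : eL < d1) (hdd : d1 ≤ d2) (hdH : d2 < eH) (hHn : eH ≤ n)
    (hlow : ∀ q, 1 ≤ q → q < d1 → q ≠ eL → f q = g q)
    (hshift : ∀ q, d1 ≤ q → q < d2 → f (q + 1) = g q)
    (hhigh : ∀ q, d2 < q → q ≤ n → q ≠ eH → f q = g q) :
    ∑ p ∈ Icc 1 n, w p * (f p - g p) =
      w eL * (f eL - g eL) +
        (w d1 * f d1 + ∑ p ∈ Ioc d1 d2, (w p - w (p - 1)) * f p - w d2 * g d2) +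
        w eH * (f eH - g eH) := by
  have hsplit : Icc 1 n = Ico 1 d1 ∪ Icc d1 d2 ∪ Ioc d2 n := by ext p; simp; omega
  rw [hsplit, sum_union, sum_union, sum_Icc_mul_sub_of_shift f g w hdd hshift]
  · congr 2
    · refine sum_eq_single_of_mem eL (by simp; omega) fun q hq hqL => ?_
      rw [hlow q (by simp at hq; omega) (by simp at hq; omega) hqL, sub_self, mul_zero]
    · refine sum_eq_single_of_mem eH (by simp; omega) fun q hq hqH => ?_
      rw [hhigh q (by simp at hq; omega) (by simp at hq; omega) hqH, sub_self, mul_zero]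
  all_goals exact disjoint_left.2 fun p hp hp' => by simp at hp hp'; omega

end Summation

lemma false_of_dvd_of_dvd {n eL d1 d2 eH : ℕ} {A C T T' a : ℤ}
    (hLd : eL < d1) (hdd : d1 ≤ d2) (hdH : d2 < eH) (hHn : eH ≤ n)
    (hA : A = 1 ∨ A = -1) (hC : C = 1 ∨ C = -1) (hT : T = 0 ∨ T = 1) (hT' : T' = 0 ∨ T' = 1)
    (ha : 0 ≤ a) (had : a ≤ d2 - d1)
    (hwt : 4 ∣ A + (T - T') + C)
    (hvt : (2 * n : ℤ) ∣ eL * A + (d1 * T + a - d2 * T') + eH * C) : False := by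
  obtain ⟨rfl, rfl⟩ : C = -A ∧ T' = T := by omega
  rcases hA with rfl | rfl <;> rcases hT with rfl | rfl <;>
    have := Int.eq_zero_of_abs_lt_dvd hvt (abs_lt.2 ⟨by omega, by omega⟩) <;> omega

lemma false_of_modEq {n eL d1 d2 eH : ℕ} {x x' : Fin n → Fin 2}
    (hL : 1 ≤ eL) (hLd : eL < d1) (hdd : d1 ≤ d2) (hdH : d2 < eH) (hHn : eH ≤ n)
    (hlow : ∀ q, 1 ≤ q → q < d1 → q ≠ eL → getBit x q = getBit x' q)
    (hneL : getBit x eL ≠ getBit x' eL)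
    (hshift : ∀ q, d1 ≤ q → q < d2 → getBit x (q + 1) = getBit x' q)
    (hhigh : ∀ q, d2 < q → q ≤ n → q ≠ eH → getBit x q = getBit x' q)
    (hneH : getBit x eH ≠ getBit x' eH)
    (hwt : wt x ≡ wt x' [MOD 4]) (hvt : vtSyn 1 x ≡ vtSyn 1 x' [MOD 2 * n]) : False := by
  set f : ℕ → ℤ := fun p => (getBit x p : ℕ)
  set g : ℕ → ℤ := fun p => (getBit x' p : ℕ)
  have hsum (w : ℕ → ℤ) := sum_Icc_mul_sub_of_agree_outside f g w hL hLd hdd hdH hHn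
    (fun q h1 h2 h3 => by simp only [f, g, hlow q h1 h2 h3])
    (fun q h1 h2 => by simp only [f, g, hshift q h1 h2])
    (fun q h1 h2 h3 => by simp only [f, g, hhigh q h1 h2 h3])
  have hwt' : (wt x : ℤ) - wt x' = (f eL - g eL) + (f d1 - g d2) + (f eH - g eH) := by
    rw [natCast_wt, natCast_wt, ← sum_sub_distrib]
    simpa using hsum 1
  have hvt' : (vtSyn 1 x : ℤ) - vtSyn 1 x' = eL * (f eL - g eL) +
      (d1 * f d1 + ∑ p ∈ Ioc d1 d2, f p - d2 * g d2) + eH * (f eH - g eH) := by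
    have hcoeff : ∑ p ∈ Ioc d1 d2, ((p : ℤ) - ((p - 1 : ℕ) : ℤ)) * f p = ∑ p ∈ Ioc d1 d2, f p :=
      sum_congr rfl fun p hp => by rw [Nat.cast_pred (by simp at hp; omega)]; ring
    rw [natCast_vtSyn_one, natCast_vtSyn_one, ← sum_sub_distrib]
    simp_rw [← mul_sub]
    rw [hsum (↑), hcoeff]
  have hf : ∀ p, 0 ≤ f p ∧ f p ≤ 1 := fun p => by
    rcases natCast_val_eq_zero_or_one (getBit x p) with h | h <;> simp [f, h]
  have hsum_nonneg : 0 ≤ ∑ p ∈ Ioc d1 d2, f p := sum_nonneg fun p _ => (hf p).1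
  have hsum_le : ∑ p ∈ Ioc d1 d2, f p ≤ d2 - d1 :=
    calc ∑ p ∈ Ioc d1 d2, f p ≤ ∑ p ∈ Ioc d1 d2, 1 := sum_le_sum fun p _ => (hf p).2
      _ = d2 - d1 := by simp [hdd]
  refine false_of_dvd_of_dvd hLd hdd hdH hHn (natCast_val_sub_eq_one_or_neg_one hneL)
    (natCast_val_sub_eq_one_or_neg_one hneH) (natCast_val_eq_zero_or_one (getBit x d1))
    (natCast_val_eq_zero_or_one (getBit x' d2)) hsum_nonneg hsum_le ?_ ?_
  · rw [← hwt']
    exact_mod_cast dvd_sub_comm.1 (Nat.modEq_iff_dvd.1 hwt)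
  · rw [← hvt']
    exact_mod_cast dvd_sub_comm.1 (Nat.modEq_iff_dvd.1 hvt)

end VTCode

open VTCode

theorem stmt12_general (n : ℕ) (c0 c1 c2 : ℕ)
    (x x' : Fin n → Fin 2)
    (hx : x ∈ codeC n c0 c1 c2) (hx' : x' ∈ codeC n c0 c1 c2)
    (d1 e1 d2 e2 : ℕ)
    (he1 : e1 ∈ Finset.Icc 1 n) (he2 : e2 ∈ Finset.Icc 1 n)
    (hE : delSub x d1 e1 = delSub x' d2 e2)
    (hcase : (e1 < d1 ∧ d1 ≤ d2 ∧ d2 < e2) ∨ (e2 < d1 ∧ d1 ≤ d2 ∧ d2 < e1)) :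
    x = x' := by
  simp only [codeC, mem_filter, mem_univ, true_and] at hx hx'
  have hwt : wt x ≡ wt x' [MOD 4] := hx.2.2.1.trans hx'.2.2.1.symm
  have hvt : vtSyn 1 x ≡ vtSyn 1 x' [MOD 2 * n] := hx.2.2.2.1.trans hx'.2.2.2.1.symm
  rw [mem_Icc] at he1 he2
  obtain ⟨eL, eH, he, hL, hLd, hdd, hdH, hHn⟩ : ∃ eL eH,
      ((eL = e1 ∧ eH = e2) ∨ (eL = e2 ∧ eH = e1)) ∧
        1 ≤ eL ∧ eL < d1 ∧ d1 ≤ d2 ∧ d2 < eH ∧ eH ≤ n := by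
    rcases hcase with h | h
    exacts [⟨e1, e2, by omega⟩, ⟨e2, e1, by omega⟩]
  obtain ⟨hlow, hneL, hshift, hhigh, hneH⟩ :=
    getBit_relations_of_delSub_eq hE he hL hLd hdd hdH hHn
  exact (false_of_modEq hL hLd hdd hdH hHn hlow hneL hshift hhigh hneH hwt hvt).elim

/-- Case (iii): e1 < d1 ≤ d2 < e2 or e2 < d1 ≤ d2 < e1 implies x = x'. -/
theorem stmt12 (n : ℕ) (hn : 2 ≤ n) (c0 c1 c2 : ℕ)
    (hc0 : c0 < 4) (hc1 : c1 < 2 * n) (hc2 : c2 < 2 * n ^ 2)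
    (x x' : Fin n → Fin 2)
    (hx : x ∈ codeC n c0 c1 c2) (hx' : x' ∈ codeC n c0 c1 c2)
    (d1 e1 d2 e2 : ℕ)
    (hd1 : d1 ∈ Finset.Icc 1 n) (he1 : e1 ∈ Finset.Icc 1 n)
    (hd2 : d2 ∈ Finset.Icc 1 n) (he2 : e2 ∈ Finset.Icc 1 n)
    (h1 : d1 ≠ e1) (h2 : d2 ≠ e2)
    (hE : delSub x d1 e1 = delSub x' d2 e2)
    (hcase : (e1 < d1 ∧ d1 ≤ d2 ∧ d2 < e2) ∨ (e2 < d1 ∧ d1 ≤ d2 ∧ d2 < e1)) :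
    x = x' :=
  stmt12_general n c0 c1 c2 x x' hx hx' d1 e1 d2 e2 he1 he2 hE hcase
end

section
/- Let n ≥ 2, (c_0, c_1, c_2) ∈ Z_4 × Z_{2n} × Z_{2n²}, and suppose x, x' ∈ C_n(c_0,c_1,c_2) and d_1, e_1, d_2, e_2 ∈ {1,…,n} with d_1 ≠ e_1, d_2 ≠ e_2, and E(x, d_1, e_1) = E(x', d_2, e_2). If d_1 ≤ d_2 < e_1 and d_1 ≤ d_2 < e_2 (Case (vi)), then x = x'. -/
open Finset

def flipAt (e : ℕ) (a : ℕ → ℤ) (p : ℕ) : ℤ := if p = e then 1 - a p else a p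

def deleteAt {α : Type*} (A : ℕ → α) (d q : ℕ) : α := if q < d then A q else A (q + 1)

theorem eq_zero_of_sum_mul_eq_mul {R ι : Type*} [CommRing R] [LinearOrder R]
    [IsStrictOrderedRing R] {s : Finset ι} {c w : ι → R} {W D K : R}
    (hc : ∀ i ∈ s, 0 ≤ c i) (hw : ∀ i ∈ s, w i ≤ W) (hWK : W < K)
    (hsum : ∑ i ∈ s, c i = D) (hwsum : ∑ i ∈ s, c i * w i = D * K) : D = 0 := by
  have hD : 0 ≤ D := hsum ▸ sum_nonneg hc
  have hle : D * K ≤ D * W := by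
    rw [← hwsum, ← hsum, sum_mul]
    exact sum_le_sum fun i hi => mul_le_mul_of_nonneg_left (hw i hi) (hc i hi)
  nlinarith

theorem abs_sum_le_card_mul {ι : Type*} {s : Finset ι} {f : ι → ℤ} {B : ℤ}
    (h : ∀ i ∈ s, |f i| ≤ B) : |∑ i ∈ s, f i| ≤ #s * B :=
  (abs_sum_le_sum_abs f s).trans (by simpa using sum_le_card_nsmul s _ B h)

theorem flipAt_of_ne {e p : ℕ} {a : ℕ → ℤ} (h : p ≠ e) : flipAt e a p = a p := if_neg h

theorem eq_of_flipAt_eq {e p : ℕ} {a b : ℕ → ℤ} (h : flipAt e a p = flipAt e b p) :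
    a p = b p := by
  unfold flipAt at h
  split_ifs at h <;> linarith

theorem shift_of_deleteAt_flipAt_eq {n d1 d2 e1 e2 : ℕ} {a b : ℕ → ℤ} (hd1 : 1 ≤ d1)
    (h12 : d1 ≤ d2) (he1 : d2 < e1) (he2 : d2 < e2) (he2n : e2 ≤ n)
    (hdel : ∀ q, 1 ≤ q → q < n →
      deleteAt (flipAt e1 a) d1 q = deleteAt (flipAt e2 b) d2 q) :
    (∀ p ∈ Ico 1 d1, b p = a p) ∧ (∀ p ∈ Ico d1 d2, b p = a (p + 1)) ∧
      ∀ p ∈ Ioc d2 n, flipAt e1 a p = flipAt e2 b p := by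
  refine ⟨fun p hp => ?_, fun p hp => ?_, fun p hp => ?_⟩ <;>
    simp only [mem_Ico, mem_Ioc] at hp
  · have := hdel p hp.1 (by omega)
    rwa [deleteAt, deleteAt, if_pos hp.2, if_pos (by omega), flipAt_of_ne (by omega),
      flipAt_of_ne (by omega), eq_comm] at this
  · have := hdel p (by omega) (by omega)
    rwa [deleteAt, deleteAt, if_neg (by omega), if_pos hp.2, flipAt_of_ne (by omega),
      flipAt_of_ne (by omega), eq_comm] at this
  · have := hdel (p - 1) (by omega) (by omega)
    rwa [deleteAt, deleteAt, if_neg (by omega), if_neg (by omega), Nat.sub_add_cancel (by omega)]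
      at this

section sums

variable {a b g : ℕ → ℤ}

theorem sum_Icc_mul_sub_of_shift {d1 d2 : ℕ} (h : d1 ≤ d2)
    (hmid : ∀ p ∈ Ico d1 d2, b p = a (p + 1)) :
    ∑ p ∈ Icc d1 d2, g p * (b p - a p) =
      g d2 * b d2 - g d1 * a d1 + ∑ p ∈ Ico d1 d2, (g p - g (p + 1)) * a (p + 1) := by
  induction d2, h using Nat.le_induction with
  | base =>
    simp only [Icc_self, sum_singleton, Ico_self, sum_empty]
    ring
  | succ k hk ih =>
    rw [sum_Icc_succ_top (by omega), sum_Ico_succ_top hk,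
      ih fun p hp => hmid p (by simp at hp ⊢; omega), hmid k (by simp; omega)]
    ring

theorem sum_Icc_mul_sub_of_rotate {d1 d2 : ℕ} (h : d1 ≤ d2)
    (hmid : ∀ p ∈ Ico d1 d2, b p = a (p + 1)) (hend : b d2 = a d1) :
    ∑ p ∈ Icc d1 d2, g p * (b p - a p) =
      ∑ p ∈ Ico d1 d2, (g (p + 1) - g p) * (a d1 - a (p + 1)) := by
  have hneg : ∑ p ∈ Ico d1 d2, (g p - g (p + 1)) * a (p + 1) =
      -∑ p ∈ Ico d1 d2, (g (p + 1) - g p) * a (p + 1) := by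
    rw [← sum_neg_distrib]
    exact sum_congr rfl fun _ _ => by ring
  rw [sum_Icc_mul_sub_of_shift h hmid, hend, hneg]
  simp only [mul_sub, sum_sub_distrib, ← sum_mul, sum_Ico_sub g h]
  ring

theorem sum_mul_sub_flipAt {s : Finset ℕ} {e : ℕ} (he : e ∈ s) :
    ∑ p ∈ s, g p * (a p - flipAt e a p) = g e * (2 * a e - 1) := by
  have hterm : ∀ p, g p * (a p - flipAt e a p) = if p = e then g e * (2 * a e - 1) else 0 := by
    intro p
    unfold flipAt
    split_ifs with hp
    · subst hp; ring
    · ring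
  simp [hterm, he]

theorem sum_mul_sub_of_flipAt_eq {s : Finset ℕ} {e1 e2 : ℕ} (he1 : e1 ∈ s) (he2 : e2 ∈ s)
    (hflip : ∀ p ∈ s, flipAt e1 a p = flipAt e2 b p) :
    ∑ p ∈ s, g p * (b p - a p) = g e2 * (2 * b e2 - 1) - g e1 * (2 * a e1 - 1) := by
  rw [← sum_mul_sub_flipAt he2, ← sum_mul_sub_flipAt he1, ← sum_sub_distrib]
  refine sum_congr rfl fun p hp => ?_
  rw [hflip p hp]
  ring

theorem sum_Icc_one_mul_sub_eq {n d1 d2 : ℕ} (hd1 : 1 ≤ d1) (h12 : d1 ≤ d2) (h2n : d2 ≤ n)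
    (hpre : ∀ p ∈ Ico 1 d1, b p = a p) :
    ∑ p ∈ Icc 1 n, g p * (b p - a p) =
      ∑ p ∈ Icc d1 d2, g p * (b p - a p) + ∑ p ∈ Ioc d2 n, g p * (b p - a p) := by
  have hzero : ∑ p ∈ Ico 1 d1, g p * (b p - a p) = 0 :=
    sum_eq_zero fun p hp => by rw [hpre p hp, sub_self, mul_zero]
  rw [← Ico_add_one_right_eq_Icc, ← Ico_add_one_right_eq_Icc, ← Ico_add_one_add_one_eq_Ioc,
    ← sum_Ico_consecutive _ (by omega : 1 ≤ d1) (by omega : d1 ≤ n + 1),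
    ← sum_Ico_consecutive _ (by omega : d1 ≤ d2 + 1) (by omega : d2 + 1 ≤ n + 1), hzero,
    zero_add]

end sums

theorem rotation_sums_eq_zero_of_dvd {n d1 d2 e1 e2 : ℕ} {a : ℕ → ℤ} {t β : ℤ}
    (ha : ∀ p, 0 ≤ a p ∧ a p ≤ 1) (ht : t = 0 ∨ t = 1) (hβ : β = 1 ∨ β = -1)
    (h12 : d1 ≤ d2) (he1 : d2 < e1) (he1n : e1 ≤ n) (he2 : d2 < e2) (he2n : e2 ≤ n)
    (h1 : 2 * (n : ℤ) ∣ ∑ p ∈ Ico d1 d2, (t - a (p + 1)) + β * (e2 - e1))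
    (h2 : 4 * (n : ℤ) ^ 2 ∣ ∑ p ∈ Ico d1 d2, 2 * ((p : ℤ) + 1) * (t - a (p + 1)) +
      β * (e2 * (e2 + 1) - e1 * (e1 + 1))) :
    ∑ p ∈ Ico d1 d2, (t - a (p + 1)) + β * (e2 - e1) = 0 ∧
      ∑ p ∈ Ico d1 d2, 2 * ((p : ℤ) + 1) * (t - a (p + 1)) +
        β * (e2 * (e2 + 1) - e1 * (e1 + 1)) = 0 := by
  have hcard : (#(Ico d1 d2) : ℤ) = d2 - d1 := by simp [h12]
  have hdiff : ∀ p, |t - a p| ≤ 1 := fun p => by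
    rcases ht with rfl | rfl <;> exact abs_le.mpr ⟨by linarith [ha p], by linarith [ha p]⟩
  have hβabs : |β| = 1 := by rcases hβ with rfl | rfl <;> simp
  constructor
  · refine Int.eq_zero_of_abs_lt_dvd h1 ?_
    have hS := abs_sum_le_card_mul (s := Ico d1 d2) fun p _ => hdiff (p + 1)
    have hT : |β * ((e2 : ℤ) - e1)| ≤ n - d2 - 1 := by
      rw [abs_mul, hβabs, one_mul]
      exact abs_le.mpr ⟨by omega, by omega⟩
    rw [hcard] at hS
    linarith [abs_add_le (∑ p ∈ Ico d1 d2, (t - a (p + 1))) (β * ((e2 : ℤ) - e1))]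
  · refine Int.eq_zero_of_abs_lt_dvd h2 ?_
    have hS := abs_sum_le_card_mul (s := Ico d1 d2) (B := 2 * n)
        (f := fun p => 2 * ((p : ℤ) + 1) * (t - a (p + 1))) fun p hp => by
      have hp2 : (p : ℤ) + 1 ≤ n := by rw [mem_Ico] at hp; omega
      rw [abs_mul, abs_of_nonneg (by positivity)]
      nlinarith [hdiff (p + 1), abs_nonneg (t - a (p + 1))]
    have hT : |β * ((e2 : ℤ) * (e2 + 1) - e1 * (e1 + 1))| < n * (n + 1) := by
      have : (1 : ℤ) ≤ e1 := by omega
      have : (e1 : ℤ) ≤ n := by omega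
      have : (1 : ℤ) ≤ e2 := by omega
      have : (e2 : ℤ) ≤ n := by omega
      rw [abs_mul, hβabs, one_mul]
      exact abs_lt.mpr ⟨by nlinarith, by nlinarith⟩
    rw [hcard] at hS
    have : (d2 : ℤ) - d1 ≤ n - 1 := by omega
    nlinarith [abs_add_le (∑ p ∈ Ico d1 d2, 2 * ((p : ℤ) + 1) * (t - a (p + 1)))
      (β * ((e2 : ℤ) * (e2 + 1) - e1 * (e1 + 1)))]

theorem eq_and_eqOn_of_rotation_sums_eq_zero {d1 d2 e1 e2 : ℕ} {a : ℕ → ℤ} {t β : ℤ}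
    (ha : ∀ p, 0 ≤ a p ∧ a p ≤ 1) (ht : t = 0 ∨ t = 1) (hβ : β = 1 ∨ β = -1)
    (he1 : d2 < e1) (he2 : d2 < e2)
    (E1 : ∑ p ∈ Ico d1 d2, (t - a (p + 1)) + β * (e2 - e1) = 0)
    (E2 : ∑ p ∈ Ico d1 d2, 2 * ((p : ℤ) + 1) * (t - a (p + 1)) +
      β * (e2 * (e2 + 1) - e1 * (e1 + 1)) = 0) :
    e1 = e2 ∧ ∀ p ∈ Ico d1 d2, a (p + 1) = t := by
  -- Multiplying by `2 * t - 1 = ±1` turns `t - a (p + 1)` into `|t - a (p + 1)|`.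
  set c : ℕ → ℤ := fun p => (2 * t - 1) * (t - a (p + 1)) with hc
  have hc0 : ∀ p ∈ Ico d1 d2, 0 ≤ c p := fun p _ => by
    rcases ht with rfl | rfl <;> nlinarith [ha (p + 1)]
  have hε : (2 * t - 1) * β ≠ 0 := by
    rcases ht with rfl | rfl <;> rcases hβ with rfl | rfl <;> norm_num
  have hsum : ∑ p ∈ Ico d1 d2, c p = (2 * t - 1) * β * (e1 - e2) := by
    rw [hc, ← mul_sum]
    linear_combination (2 * t - 1) * E1
  have hwsum : ∑ p ∈ Ico d1 d2, c p * (2 * ((p : ℤ) + 1)) =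
      (2 * t - 1) * β * (e1 - e2) * (e1 + e2 + 1) := by
    have : ∑ p ∈ Ico d1 d2, c p * (2 * ((p : ℤ) + 1)) =
        (2 * t - 1) * ∑ p ∈ Ico d1 d2, 2 * ((p : ℤ) + 1) * (t - a (p + 1)) := by
      rw [mul_sum]
      exact sum_congr rfl fun _ _ => by ring
    rw [this]
    linear_combination (2 * t - 1) * E2
  have hD := eq_zero_of_sum_mul_eq_mul hc0 (W := 2 * (d2 : ℤ))
    (fun p hp => by rw [mem_Ico] at hp; omega)
    (by omega) hsum hwsum
  have he : (e1 : ℤ) - e2 = 0 := (mul_eq_zero.mp hD).resolve_left hε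
  refine ⟨by omega, fun p hp => ?_⟩
  rw [he, mul_zero] at hsum
  have hcp := (sum_eq_zero_iff_of_nonneg hc0).mp hsum p hp
  have ht' : 2 * t - 1 ≠ 0 := by rcases ht with rfl | rfl <;> norm_num
  linarith [(mul_eq_zero.mp hcp).resolve_left ht']

theorem eqOn_Icc_of_rotate_const {n d1 d2 e : ℕ} {a b : ℕ → ℤ}
    (hpre : ∀ p ∈ Ico 1 d1, b p = a p) (hmid : ∀ p ∈ Ico d1 d2, b p = a (p + 1))
    (hend : b d2 = a d1) (hconst : ∀ p ∈ Ico d1 d2, a (p + 1) = a d1)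
    (htail : ∀ p ∈ Ioc d2 n, flipAt e a p = flipAt e b p) :
    ∀ p ∈ Icc 1 n, a p = b p := by
  intro p hp
  rw [mem_Icc] at hp
  rcases lt_or_ge p d1 with hpd1 | hpd1
  · exact (hpre p (mem_Ico.mpr ⟨hp.1, hpd1⟩)).symm
  rcases lt_or_ge d2 p with hpd2 | hpd2
  · exact eq_of_flipAt_eq (htail p (mem_Ioc.mpr ⟨hpd2, hp.2⟩))
  have ha : a p = a d1 := by
    rcases eq_or_lt_of_le hpd1 with rfl | hlt
    · rfl
    · simpa [Nat.sub_add_cancel (by omega : 1 ≤ p)] using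
        hconst (p - 1) (mem_Ico.mpr ⟨by omega, by omega⟩)
  have hb : b p = a d1 := by
    rcases eq_or_lt_of_le hpd2 with rfl | hlt
    · exact hend
    · rw [hmid p (mem_Ico.mpr ⟨hpd1, hlt⟩), hconst p (mem_Ico.mpr ⟨hpd1, hlt⟩)]
  rw [ha, hb]

theorem eqOn_Icc_of_shift_of_dvd {n d1 d2 e1 e2 : ℕ} {a b : ℕ → ℤ}
    (ha : ∀ p, 0 ≤ a p ∧ a p ≤ 1) (hb : ∀ p, 0 ≤ b p ∧ b p ≤ 1)
    (hd1 : 1 ≤ d1) (h12 : d1 ≤ d2) (he1 : d2 < e1) (he1n : e1 ≤ n) (he2 : d2 < e2)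
    (he2n : e2 ≤ n) (hpre : ∀ p ∈ Ico 1 d1, b p = a p)
    (hmid : ∀ p ∈ Ico d1 d2, b p = a (p + 1))
    (htail : ∀ p ∈ Ioc d2 n, flipAt e1 a p = flipAt e2 b p)
    (h0 : 4 ∣ ∑ p ∈ Icc 1 n, (b p - a p))
    (h1 : 2 * (n : ℤ) ∣ ∑ p ∈ Icc 1 n, (p : ℤ) * (b p - a p))
    (h2 : 4 * (n : ℤ) ^ 2 ∣ ∑ p ∈ Icc 1 n, (p : ℤ) * (p + 1) * (b p - a p)) :
    ∀ p ∈ Icc 1 n, a p = b p := by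
  have hsplit (g : ℕ → ℤ) : ∑ p ∈ Icc 1 n, g p * (b p - a p) =
      ∑ p ∈ Icc d1 d2, g p * (b p - a p) + (g e2 * (2 * b e2 - 1) - g e1 * (2 * a e1 - 1)) := by
    rw [sum_Icc_one_mul_sub_eq hd1 h12 (by omega) hpre,
      sum_mul_sub_of_flipAt_eq (by simp; omega) (by simp; omega) htail]
  have hwt := hsplit fun _ => 1
  rw [sum_Icc_mul_sub_of_shift h12 hmid] at hwt
  simp only [one_mul, sub_self, zero_mul, sum_const_zero, add_zero] at hwt
  rw [hwt] at h0
  -- `b d2 - a d1 ∈ [-1, 1]` and `2 * (b e2 - a e1) ∈ [-2, 2]` sum to a multiple of 4 only if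
  -- both vanish.
  obtain ⟨hend, hflip⟩ : b d2 = a d1 ∧ b e2 = a e1 := by
    have := ha d1; have := hb d2; have := ha e1; have := hb e2
    omega
  have hrot (g : ℕ → ℤ) : ∑ p ∈ Icc 1 n, g p * (b p - a p) =
      ∑ p ∈ Ico d1 d2, (g (p + 1) - g p) * (a d1 - a (p + 1)) +
        (2 * a e1 - 1) * (g e2 - g e1) := by
    rw [hsplit, sum_Icc_mul_sub_of_rotate h12 hmid hend, hflip]
    ring
  rw [hrot fun p => (p : ℤ)] at h1
  rw [hrot fun p => (p : ℤ) * (p + 1)] at h2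
  have hw (p : ℕ) :
      ((p + 1 : ℕ) : ℤ) * ((p + 1 : ℕ) + 1) - p * (p + 1) = 2 * ((p : ℤ) + 1) := by
    push_cast
    ring
  simp only [Nat.cast_add, Nat.cast_one, add_sub_cancel_left, one_mul] at h1
  simp only [hw] at h2
  have ht : a d1 = 0 ∨ a d1 = 1 := by have := ha d1; omega
  have hβ : 2 * a e1 - 1 = 1 ∨ 2 * a e1 - 1 = -1 := by have := ha e1; omega
  obtain ⟨E1, E2⟩ := rotation_sums_eq_zero_of_dvd ha ht hβ h12 he1 he1n he2 he2n h1 h2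
  obtain ⟨he, hconst⟩ := eq_and_eqOn_of_rotation_sums_eq_zero ha ht hβ he1 he2 E1 E2
  subst he
  exact eqOn_Icc_of_rotate_const hpre hmid hend hconst htail

def bitInt {n : ℕ} (x : Fin n → Fin 2) (p : ℕ) : ℤ := (getBit x p : ℕ)

section bitInt

variable {n : ℕ} (x : Fin n → Fin 2)

theorem bitInt_mem (p : ℕ) : 0 ≤ bitInt x p ∧ bitInt x p ≤ 1 := by
  have := (getBit x p).isLt
  unfold bitInt
  omega

theorem bitInt_succ (i : Fin n) : bitInt x (i + 1) = (x i : ℕ) := by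
  simp [bitInt, getBit]

theorem sum_Icc_mul_bitInt (g : ℕ → ℤ) :
    ∑ p ∈ Icc 1 n, g p * bitInt x p = ∑ i : Fin n, g (i + 1) * (x i : ℕ) := by
  rw [← Ico_add_one_right_eq_Icc, ← zero_add 1, ← sum_Ico_add', ← range_eq_Ico,
    ← Fin.sum_univ_eq_sum_range]
  simp only [zero_add, bitInt_succ]

theorem two_mul_sum_Icc_id (m : ℕ) : 2 * ∑ l ∈ Icc 1 m, (l : ℤ) = m * (m + 1) := by
  induction m with
  | zero => simp
  | succ k ih =>
    rw [sum_Icc_succ_top (by omega), mul_add, ih]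
    push_cast
    ring

theorem wt_eq_sum : (wt x : ℤ) = ∑ p ∈ Icc 1 n, bitInt x p := by
  simpa [wt] using (sum_Icc_mul_bitInt x fun _ => 1).symm

theorem vtSyn_one_eq_sum : (vtSyn 1 x : ℤ) = ∑ p ∈ Icc 1 n, (p : ℤ) * bitInt x p := by
  rw [sum_Icc_mul_bitInt]
  simp [vtSyn]

theorem two_mul_vtSyn_two_eq_sum :
    2 * (vtSyn 2 x : ℤ) = ∑ p ∈ Icc 1 n, (p : ℤ) * (p + 1) * bitInt x p := by
  rw [sum_Icc_mul_bitInt, vtSyn]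
  push_cast
  rw [mul_sum]
  refine sum_congr rfl fun i _ => ?_
  simp only [pow_one]
  rw [← mul_assoc, two_mul_sum_Icc_id]
  push_cast
  ring

theorem bitInt_substAt (e : ℕ) {p : ℕ} (hp1 : 1 ≤ p) (hpn : p ≤ n) :
    bitInt (substAt x e) p = flipAt e (bitInt x) p := by
  have hcast : ∀ v : Fin 2, (((1 - v : Fin 2) : ℕ) : ℤ) = 1 - (v : ℕ) := by decide
  have hbit : getBit (substAt x e) p = if p = e then 1 - getBit x p else getBit x p := by
    simp only [getBit, dif_pos (show p - 1 < n by omega), substAt, Nat.sub_add_cancel hp1]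
  unfold flipAt bitInt
  rw [hbit]
  split_ifs
  · exact hcast _
  · rfl

theorem bitInt_delAt (d : ℕ) {q : ℕ} (hq1 : 1 ≤ q) (hqn : q < n) :
    bitInt (delAt x d) q = deleteAt (bitInt x) d q := by
  unfold bitInt deleteAt
  rw [getBit, dif_pos (by omega), delAt]
  simp only [Nat.sub_add_cancel hq1, show q - 1 + 2 = q + 1 by omega]
  split_ifs <;> rfl

theorem bitInt_delSub (d e : ℕ) {q : ℕ} (hq1 : 1 ≤ q) (hqn : q < n) :
    bitInt (delSub x d e) q = deleteAt (flipAt e (bitInt x)) d q := by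
  rw [delSub, bitInt_delAt _ d hq1 hqn, deleteAt, deleteAt,
    bitInt_substAt x e hq1 hqn.le, bitInt_substAt x e (by omega) hqn]

end bitInt

theorem eq_of_bitInt_eq {n : ℕ} {x x' : Fin n → Fin 2}
    (h : ∀ p ∈ Icc 1 n, bitInt x p = bitInt x' p) : x = x' := by
  funext i
  have := h (i + 1) (mem_Icc.mpr ⟨by omega, i.isLt⟩)
  rw [bitInt_succ, bitInt_succ] at this
  exact Fin.ext (by exact_mod_cast this)

theorem dvd_sum_sub_of_mem_codeC {n c0 c1 c2 : ℕ} {x x' : Fin n → Fin 2}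
    (hx : x ∈ codeC n c0 c1 c2) (hx' : x' ∈ codeC n c0 c1 c2) :
    4 ∣ ∑ p ∈ Icc 1 n, (bitInt x' p - bitInt x p) ∧
      2 * (n : ℤ) ∣ ∑ p ∈ Icc 1 n, (p : ℤ) * (bitInt x' p - bitInt x p) ∧
      4 * (n : ℤ) ^ 2 ∣
        ∑ p ∈ Icc 1 n, (p : ℤ) * (p + 1) * (bitInt x' p - bitInt x p) := by
  simp only [codeC, mem_filter, mem_univ, true_and] at hx hx'
  simp only [mul_sub, sum_sub_distrib]
  refine ⟨?_, ?_, ?_⟩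
  · have := Nat.ModEq.dvd (hx.2.2.1.trans hx'.2.2.1.symm)
    rwa [wt_eq_sum, wt_eq_sum] at this
  · have := Nat.ModEq.dvd (hx.2.2.2.1.trans hx'.2.2.2.1.symm)
    push_cast at this
    rwa [vtSyn_one_eq_sum, vtSyn_one_eq_sum] at this
  · have := mul_dvd_mul_left 2 (Nat.ModEq.dvd (hx.2.2.2.2.trans hx'.2.2.2.2.symm))
    push_cast at this
    rwa [mul_sub, two_mul_vtSyn_two_eq_sum, two_mul_vtSyn_two_eq_sum, ← mul_assoc] at this

theorem stmt14_general (n : ℕ) (c0 c1 c2 : ℕ)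
    (x x' : Fin n → Fin 2)
    (hx : x ∈ codeC n c0 c1 c2) (hx' : x' ∈ codeC n c0 c1 c2)
    (d1 e1 d2 e2 : ℕ)
    (hd1 : d1 ∈ Finset.Icc 1 n) (he1 : e1 ∈ Finset.Icc 1 n)
    (he2 : e2 ∈ Finset.Icc 1 n)
    (hE : delSub x d1 e1 = delSub x' d2 e2)
    (hcase : (d1 ≤ d2 ∧ d2 < e1) ∧ (d1 ≤ d2 ∧ d2 < e2)) :
    x = x' := by
  obtain ⟨⟨h12, hd2e1⟩, -, hd2e2⟩ := hcase
  rw [mem_Icc] at hd1 he1 he2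
  have hdel (q : ℕ) (hq1 : 1 ≤ q) (hqn : q < n) :
      deleteAt (flipAt e1 (bitInt x)) d1 q = deleteAt (flipAt e2 (bitInt x')) d2 q := by
    rw [← bitInt_delSub x d1 e1 hq1 hqn, ← bitInt_delSub x' d2 e2 hq1 hqn, hE]
  obtain ⟨hpre, hmid, htail⟩ := shift_of_deleteAt_flipAt_eq hd1.1 h12 hd2e1 hd2e2 he2.2 hdel
  obtain ⟨h0, h1, h2⟩ := dvd_sum_sub_of_mem_codeC hx hx'
  exact eq_of_bitInt_eq (eqOn_Icc_of_shift_of_dvd (bitInt_mem x) (bitInt_mem x') hd1.1 h12 hd2e1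
    he1.2 hd2e2 he2.2 hpre hmid htail h0 h1 h2)

/-- Case (vi): d1 ≤ d2 < e1 and d1 ≤ d2 < e2 implies x = x'. -/
theorem stmt14 (n : ℕ) (hn : 2 ≤ n) (c0 c1 c2 : ℕ)
    (hc0 : c0 < 4) (hc1 : c1 < 2 * n) (hc2 : c2 < 2 * n ^ 2)
    (x x' : Fin n → Fin 2)
    (hx : x ∈ codeC n c0 c1 c2) (hx' : x' ∈ codeC n c0 c1 c2)
    (d1 e1 d2 e2 : ℕ)
    (hd1 : d1 ∈ Finset.Icc 1 n) (he1 : e1 ∈ Finset.Icc 1 n)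
    (hd2 : d2 ∈ Finset.Icc 1 n) (he2 : e2 ∈ Finset.Icc 1 n)
    (h1 : d1 ≠ e1) (h2 : d2 ≠ e2)
    (hE : delSub x d1 e1 = delSub x' d2 e2)
    (hcase : (d1 ≤ d2 ∧ d2 < e1) ∧ (d1 ≤ d2 ∧ d2 < e2)) :
    x = x' :=
  stmt14_general n c0 c1 c2 x x' hx hx' d1 e1 d2 e2 hd1 he1 he2 hE hcase
end

section
/- Let n ≥ 2 and let x, x' ∈ {0,1}^n satisfy wt(x) ≡ wt(x') (mod 4). Suppose d_1, e_1, d_2, e_2 ∈ {1,…,n} with d_1 ≠ e_1, d_2 ≠ e_2, e_1 < d_1 ≤ d_2, e_2 < d_1, e_1 ≠ e_2, and E(x, d_1, e_1) = E(x', d_2, e_2). Let λ_2 = max{e_1, e_2} and let u_i = Σ_{ℓ=i}^n x_ℓ − Σ_{ℓ=i}^n x'_ℓ. Then: either u_i ≥ 0 for all i ∈ [1, λ_2] or u_i ≤ 0 for all i ∈ [1, λ_2]; either u_i ≥ 0 for all i ∈ [λ_2+1, n] or u_i ≤ 0 for all i ∈ [λ_2+1, n]; and |u_i| ≤ 1 for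 all i ∈ {1,…,n}. -/
/-!
Let `y = E(x, d₁, e₁) = E(x', d₂, e₂)`. As both substitutions lie before `d₁`, the suffix
weights of `x` and `x'` are those of `y` up to explicit corrections: for `i ≤ d₁` they differ
from the weight of `y` by `x_{d₁}` (resp. `x'_{d₂}`) and by `±1` when `i ≤ e₁` (resp. `i ≤ e₂`);
for `d₁ < i ≤ d₂` this gives `u_i = y_{i-1} - x'_{d₂}`, and `u_i = 0` beyond `d₂`.
In particular `u₁ = (x_{d₁} - x'_{d₂}) + 2 (x_{e₁} - x'_{e₂})` is divisible by `4` and lies in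
`[-3, 3]`, so `x_{d₁} = x'_{d₂}` and `x_{e₁} = x'_{e₂}`. Then `u` only takes the values `0` and
`u_{λ₂}` on `[1, λ₂]`, and the values `0` and `1 - 2 x'_{d₂}` on `[λ₂ + 1, n]`.
-/

open Finset

section SuffixWeight

variable {n : ℕ}

def bit (x : Fin n → Fin 2) (p : ℕ) : ℤ := (getBit x p : ℕ)

/-- Since `0 - 1 = 0`, `getBit x 0 = getBit x 1`; hence the hypotheses `1 ≤ i` below. -/
def suffixWt (x : Fin n → Fin 2) (i : ℕ) : ℤ := ∑ l ∈ Icc i n, bit x l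

lemma uSeq_eq_suffixWt_sub (x x' : Fin n → Fin 2) (i : ℕ) :
    uSeq x x' i = suffixWt x i - suffixWt x' i := rfl

lemma bit_eq_zero_or_one (x : Fin n → Fin 2) (p : ℕ) : bit x p = 0 ∨ bit x p = 1 := by
  unfold bit getBit
  split
  · have := (x ⟨p - 1, ‹_›⟩).isLt
    omega
  · simp

lemma bit_substAt (x : Fin n → Fin 2) (e : ℕ) {p : ℕ} (hp : 1 ≤ p) (hpn : p ≤ n) :
    bit (substAt x e) p = if p = e then 1 - bit x p else bit x p := by
  have hcomp : ∀ a : Fin 2, (((1 - a : Fin 2) : ℕ) : ℤ) = 1 - ((a : ℕ) : ℤ) := by decide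
  simp only [bit, getBit, substAt, dif_pos (show p - 1 < n by omega), Nat.sub_add_cancel hp]
  split_ifs <;> simp [hcomp]

lemma bit_delAt (x : Fin n → Fin 2) (d : ℕ) {p : ℕ} (hp : 1 ≤ p) (hpn : p ≤ n - 1) :
    bit (delAt x d) p = if p < d then bit x p else bit x (p + 1) := by
  simp only [bit, getBit, delAt, dif_pos (show p - 1 < n - 1 by omega), Nat.sub_add_cancel hp,
    show p - 1 + 2 = p + 1 by omega]
  split_ifs <;> rfl

lemma suffixWt_eq_sum_Ico_add (x : Fin n → Fin 2) {i j : ℕ} (hij : i ≤ j) (hj : j ≤ n + 1) :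
    suffixWt x i = ∑ l ∈ Ico i j, bit x l + suffixWt x j := by
  rw [suffixWt, suffixWt, ← sum_union (disjoint_left.2 fun l hl hl' => by simp only [mem_Ico, mem_Icc] at hl hl'; omega)]
  congr 1
  ext l
  simp only [mem_Icc, mem_union, mem_Ico]
  omega

lemma suffixWt_eq_add (x : Fin n → Fin 2) {i : ℕ} (hi : i ≤ n) :
    suffixWt x i = bit x i + suffixWt x (i + 1) := by
  rw [suffixWt_eq_sum_Ico_add x (Nat.le_succ i) (by omega), Nat.Ico_succ_singleton, sum_singleton]

lemma suffixWt_one (x : Fin n → Fin 2) : suffixWt x 1 = wt x := by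
  have hbit : ∀ i : Fin n, bit x (i + 1) = (x i : ℕ) := fun i => by
    simp [bit, getBit]
  rw [wt, Nat.cast_sum, ← sum_congr rfl fun i _ => hbit i,
    Fin.sum_univ_eq_sum_range (fun i => bit x (i + 1)), range_eq_Ico, sum_Ico_add', zero_add,
    Ico_add_one_right_eq_Icc, suffixWt]

lemma suffixWt_substAt (x : Fin n → Fin 2) {e i : ℕ} (hi : 1 ≤ i) (he : e ≤ n) :
    suffixWt (substAt x e) i = suffixWt x i + if i ≤ e then 1 - 2 * bit x e else 0 := by
  have hbit : ∀ l ∈ Icc i n,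
      bit (substAt x e) l = bit x l + if e = l then 1 - 2 * bit x e else 0 := fun l hl => by
    rw [mem_Icc] at hl
    rw [bit_substAt x e (by omega) hl.2]
    split_ifs <;> subst_vars <;> omega
  rw [suffixWt, sum_congr rfl hbit, sum_add_distrib, sum_ite_eq, suffixWt]
  simp only [mem_Icc, he, and_true]

lemma suffixWt_delAt_of_le (x : Fin n → Fin 2) {d i : ℕ} (hd : 1 ≤ d) (hdi : d ≤ i) :
    suffixWt (delAt x d) i = suffixWt x (i + 1) := by
  have hbit : ∀ l ∈ Icc i (n - 1), bit (delAt x d) l = bit x (l + 1) := fun l hl => by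
    rw [mem_Icc] at hl
    rw [bit_delAt x d (by omega) hl.2, if_neg (by omega)]
  have hshift : Icc (i + 1) n = (Icc i (n - 1)).map (addRightEmbedding 1) := by
    rw [map_add_right_Icc]
    ext l
    simp only [mem_Icc]
    omega
  rw [suffixWt, sum_congr rfl hbit, suffixWt, hshift, sum_map]
  rfl

lemma suffixWt_delAt_of_ge (x : Fin n → Fin 2) {d i : ℕ} (hi : 1 ≤ i) (hid : i ≤ d)
    (hdn : d ≤ n) : suffixWt (delAt x d) i = suffixWt x i - bit x d := by
  have hbit : ∀ l ∈ Ico i d, bit (delAt x d) l = bit x l := fun l hl => by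
    rw [mem_Ico] at hl
    rw [bit_delAt x d (by omega) (by omega), if_pos hl.2]
  rw [suffixWt_eq_sum_Ico_add _ hid (by omega), sum_congr rfl hbit,
    suffixWt_delAt_of_le x (by omega) le_rfl, suffixWt_eq_sum_Ico_add x hid (by omega),
    suffixWt_eq_add x hdn]
  ring

lemma suffixWt_delSub_of_le (x : Fin n → Fin 2) {d e i : ℕ} (hed : e < d) (hdn : d ≤ n)
    (hdi : d ≤ i) : suffixWt (delSub x d e) i = suffixWt x (i + 1) := by
  rw [delSub, suffixWt_delAt_of_le _ (by omega) hdi, suffixWt_substAt x (by omega) (by omega),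
    if_neg (by omega), add_zero]

lemma suffixWt_delSub_of_ge (x : Fin n → Fin 2) {d e i : ℕ} (hed : e < d) (hdn : d ≤ n)
    (hi : 1 ≤ i) (hid : i ≤ d) :
    suffixWt (delSub x d e) i =
      suffixWt x i - bit x d + if i ≤ e then 1 - 2 * bit x e else 0 := by
  rw [delSub, suffixWt_delAt_of_ge _ hi hid hdn, suffixWt_substAt x hi (by omega),
    bit_substAt x e (by omega) hdn, if_neg hed.ne']
  ring

end SuffixWeight

lemma forall_nonneg_or_forall_nonpos_of_eq_zero_or_eq {ι R : Type*} [LinearOrder R] [Zero R]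
    {s : Finset ι} {f : ι → R} {v : R} (h : ∀ i ∈ s, f i = 0 ∨ f i = v) :
    (∀ i ∈ s, 0 ≤ f i) ∨ (∀ i ∈ s, f i ≤ 0) := by
  rcases le_total 0 v with hv | hv
  · exact .inl fun i hi => by rcases h i hi with h | h <;> simp [h, hv]
  · exact .inr fun i hi => by rcases h i hi with h | h <;> simp [h, hv]

section DelSubCollision

variable {n : ℕ} {x x' : Fin n → Fin 2} {d e d' e' i : ℕ}

lemma uSeq_of_le (hE : delSub x d e = delSub x' d' e') (he : e < d) (he' : e' < d)
    (hdd' : d ≤ d') (hd'n : d' ≤ n) (hi : 1 ≤ i) (hid : i ≤ d) :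
    uSeq x x' i = bit x d - bit x' d' + (if i ≤ e' then 1 - 2 * bit x' e' else 0) -
      if i ≤ e then 1 - 2 * bit x e else 0 := by
  have h := suffixWt_delSub_of_ge x he (hdd'.trans hd'n) hi hid
  have h' := suffixWt_delSub_of_ge x' (he'.trans_le hdd') hd'n hi (hid.trans hdd')
  rw [hE] at h
  rw [uSeq_eq_suffixWt_sub]
  linarith

lemma uSeq_of_mem_Ioc (hE : delSub x d e = delSub x' d' e') (he : e < d) (he' : e' < d)
    (hd'n : d' ≤ n) (hdi : d < i) (hid' : i ≤ d') :
    uSeq x x' i = bit (delSub x d e) (i - 1) - bit x' d' := by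
  have h := suffixWt_delSub_of_le x he (by omega) (show d ≤ i - 1 by omega)
  have h' := suffixWt_delSub_of_ge x' (show e' < d' by omega) hd'n (by omega) hid'
  have hy := suffixWt_eq_add (delSub x d e) (show i - 1 ≤ n - 1 by omega)
  rw [Nat.sub_add_cancel (by omega)] at h hy
  rw [if_neg (by omega), ← hE] at h'
  rw [uSeq_eq_suffixWt_sub]
  linarith

lemma uSeq_of_lt (hE : delSub x d e = delSub x' d' e') (he : e < d) (he' : e' < d')
    (hdd' : d ≤ d') (hd'n : d' ≤ n) (hi : d' < i) : uSeq x x' i = 0 := by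
  have h := suffixWt_delSub_of_le x he (hdd'.trans hd'n) (show d ≤ i - 1 by omega)
  have h' := suffixWt_delSub_of_le x' he' hd'n (show d' ≤ i - 1 by omega)
  rw [hE, Nat.sub_add_cancel (by omega)] at h
  rw [Nat.sub_add_cancel (by omega)] at h'
  rw [uSeq_eq_suffixWt_sub, ← h, ← h', sub_self]

lemma bit_eq_and_bit_eq_of_wt_modEq (hwt : wt x ≡ wt x' [MOD 4])
    (hE : delSub x d e = delSub x' d' e') (he : e < d) (he' : e' < d) (hdd' : d ≤ d')
    (hd'n : d' ≤ n) (he1 : 1 ≤ e) (he1' : 1 ≤ e') :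
    bit x d = bit x' d' ∧ bit x e = bit x' e' := by
  have h4 : (4 : ℤ) ∣ uSeq x x' 1 := by
    rw [uSeq_eq_suffixWt_sub, suffixWt_one, suffixWt_one]
    exact Nat.modEq_iff_dvd.1 hwt.symm
  rw [uSeq_of_le hE he he' hdd' hd'n le_rfl (by omega), if_pos he1, if_pos he1'] at h4
  have := bit_eq_zero_or_one x d
  have := bit_eq_zero_or_one x' d'
  have := bit_eq_zero_or_one x e
  have := bit_eq_zero_or_one x' e'
  omega

lemma exists_abs_le_one_uSeq_eq_zero_or_eq_left (hE : delSub x d e = delSub x' d' e')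
    (he : e < d) (he' : e' < d) (hdd' : d ≤ d') (hd'n : d' ≤ n) (he1 : 1 ≤ e)
    (hab : bit x d = bit x' d' ∧ bit x e = bit x' e') :
    ∃ v : ℤ, |v| ≤ 1 ∧ ∀ i ∈ Icc 1 (max e e'), uSeq x x' i = 0 ∨ uSeq x x' i = v := by
  have := bit_eq_zero_or_one x e
  refine ⟨uSeq x x' (max e e'), ?_, fun i hi => ?_⟩
  · rw [uSeq_of_le hE he he' hdd' hd'n (by omega) (by omega), abs_le]
    split_ifs <;> omega
  · rw [mem_Icc] at hi
    rw [uSeq_of_le hE he he' hdd' hd'n hi.1 (by omega),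
      uSeq_of_le hE he he' hdd' hd'n (by omega) (by omega)]
    split_ifs <;> omega

lemma exists_abs_le_one_uSeq_eq_zero_or_eq_right (hE : delSub x d e = delSub x' d' e')
    (he : e < d) (he' : e' < d) (hdd' : d ≤ d') (hd'n : d' ≤ n)
    (hab : bit x d = bit x' d') :
    ∃ v : ℤ, |v| ≤ 1 ∧ ∀ i ∈ Icc (max e e' + 1) n, uSeq x x' i = 0 ∨ uSeq x x' i = v := by
  have := bit_eq_zero_or_one x' d'
  refine ⟨1 - 2 * bit x' d', by rw [abs_le]; omega, fun i hi => ?_⟩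
  rw [mem_Icc] at hi
  rcases le_or_gt i d with hid | hdi
  · rw [uSeq_of_le hE he he' hdd' hd'n (by omega) hid, if_neg (by omega), if_neg (by omega)]
    omega
  rcases le_or_gt i d' with hid' | hd'i
  · rw [uSeq_of_mem_Ioc hE he he' hd'n hdi hid']
    have := bit_eq_zero_or_one (delSub x d e) (i - 1)
    omega
  · exact .inl (uSeq_of_lt hE he (by omega) hdd' hd'n hd'i)

end DelSubCollision

theorem stmt15_general (n : ℕ) (x x' : Fin n → Fin 2)
    (hwt : wt x ≡ wt x' [MOD 4])
    (d1 e1 d2 e2 : ℕ)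
    (he1 : e1 ∈ Finset.Icc 1 n)
    (hd2 : d2 ∈ Finset.Icc 1 n) (he2 : e2 ∈ Finset.Icc 1 n)
    (hcase : e1 < d1 ∧ d1 ≤ d2 ∧ e2 < d1 ∧ e1 ≠ e2)
    (hE : delSub x d1 e1 = delSub x' d2 e2) :
    ((∀ i ∈ Finset.Icc 1 (max e1 e2), 0 ≤ uSeq x x' i) ∨
      (∀ i ∈ Finset.Icc 1 (max e1 e2), uSeq x x' i ≤ 0)) ∧
    ((∀ i ∈ Finset.Icc (max e1 e2 + 1) n, 0 ≤ uSeq x x' i) ∨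
      (∀ i ∈ Finset.Icc (max e1 e2 + 1) n, uSeq x x' i ≤ 0)) ∧
    (∀ i ∈ Finset.Icc 1 n, |uSeq x x' i| ≤ 1) := by
  obtain ⟨he1d1, hd1d2, he2d1, -⟩ := hcase
  rw [mem_Icc] at he1 hd2 he2
  have hab := bit_eq_and_bit_eq_of_wt_modEq hwt hE he1d1 he2d1 hd1d2 hd2.2 he1.1 he2.1
  obtain ⟨v₁, hv₁, h₁⟩ :=
    exists_abs_le_one_uSeq_eq_zero_or_eq_left hE he1d1 he2d1 hd1d2 hd2.2 he1.1 hab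
  obtain ⟨v₂, hv₂, h₂⟩ :=
    exists_abs_le_one_uSeq_eq_zero_or_eq_right hE he1d1 he2d1 hd1d2 hd2.2 hab.1
  refine ⟨forall_nonneg_or_forall_nonpos_of_eq_zero_or_eq h₁,
    forall_nonneg_or_forall_nonpos_of_eq_zero_or_eq h₂, fun i hi => ?_⟩
  rw [mem_Icc] at hi
  obtain ⟨v, hv, hu | hu⟩ : ∃ v : ℤ, |v| ≤ 1 ∧ (uSeq x x' i = 0 ∨ uSeq x x' i = v) := by
    rcases le_or_gt i (max e1 e2) with h | h
    · exact ⟨v₁, hv₁, h₁ i (mem_Icc.2 ⟨hi.1, h⟩)⟩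
    · exact ⟨v₂, hv₂, h₂ i (mem_Icc.2 ⟨h, hi.2⟩)⟩
  all_goals simp [hu, hv]

/-- Claim 1, Case (i): with `λ₂ = max{e1,e2}`, the sequence `u`
is sign-constant on `[1,λ₂]` and on `[λ₂+1,n]`, and `|u_i| ≤ 1` everywhere. -/
theorem stmt15 (n : ℕ) (hn : 2 ≤ n) (x x' : Fin n → Fin 2)
    (hwt : wt x ≡ wt x' [MOD 4])
    (d1 e1 d2 e2 : ℕ)
    (hd1 : d1 ∈ Finset.Icc 1 n) (he1 : e1 ∈ Finset.Icc 1 n)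
    (hd2 : d2 ∈ Finset.Icc 1 n) (he2 : e2 ∈ Finset.Icc 1 n)
    (h1 : d1 ≠ e1) (h2 : d2 ≠ e2)
    (hcase : e1 < d1 ∧ d1 ≤ d2 ∧ e2 < d1 ∧ e1 ≠ e2)
    (hE : delSub x d1 e1 = delSub x' d2 e2) :
    ((∀ i ∈ Finset.Icc 1 (max e1 e2), 0 ≤ uSeq x x' i) ∨
      (∀ i ∈ Finset.Icc 1 (max e1 e2), uSeq x x' i ≤ 0)) ∧
    ((∀ i ∈ Finset.Icc (max e1 e2 + 1) n, 0 ≤ uSeq x x' i) ∨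
      (∀ i ∈ Finset.Icc (max e1 e2 + 1) n, uSeq x x' i ≤ 0)) ∧
    (∀ i ∈ Finset.Icc 1 n, |uSeq x x' i| ≤ 1) :=
  stmt15_general n x x' hwt d1 e1 d2 e2 he1 hd2 he2 hcase hE
end
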